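/- arXiv:2311.08570 — 8 statements merged into one kernel-verified Lean document; each statement's English description precedes it below -/
import Mathlib

section
/- For every hypergraph G = (V, E), the multilinear polytope is contained in the extended flower relaxation: ML(G) ⊆ flowerRel(G). -/
open Finset

/-- A set `I` is a singleton `{v}`. -/
def IsSingleton {V : Type} (I : Finset V) : Prop := ∃ v : V, I = {v}

instance {V : Type} [DecidableEq V] [Fintype V] (I : Finset V) :
    Decidable (IsSingleton I) :=
  inferInstanceAs (Decidable (∃ v : V, I = {v}))

/-- The successors of node `I` in the arc set `A`. -/
def succOf {V : Type} [DecidableEq V] (A : Finset (Finset V × Finset V))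
    (I : Finset V) : Finset (Finset V) :=
  (A.filter fun a => a.1 = I).image Prod.snd

/-- A recursive linearization over the finite ground set `V`: a simple digraph whose
nodes are nonempty subsets of `V` including all singletons, where each arc goes from a
set to a subset, and the successors of every non-singleton node cover it. -/
structure RecLin (V : Type) [Fintype V] [DecidableEq V] where
  nodes : Finset (Finset V)
  arcs : Finset (Finset V × Finset V)
  arcs_fst_mem : ∀ a ∈ arcs, a.1 ∈ nodes
  arcs_snd_mem : ∀ a ∈ arcs, a.2 ∈ nodes
  no_loops : ∀ a ∈ arcs, a.1 ≠ a.2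
  singleton_mem : ∀ v : V, ({v} : Finset V) ∈ nodes
  nodes_nonempty : ∀ I ∈ nodes, I.Nonempty
  arcs_subset : ∀ a ∈ arcs, a.2 ⊆ a.1
  succ_union : ∀ I ∈ nodes, ¬ IsSingleton I → (succOf arcs I).biUnion id = I

/-- The relaxation `P(D)` of a recursive linearization, as a subset of `ℝ^{Finset V}`
constraining only the coordinates indexed by nodes of `D`. -/
def relax {V : Type} [Fintype V] [DecidableEq V] (D : RecLin V) :
    Set (Finset V → ℝ) :=
  { z | (∀ I ∈ D.nodes, 0 ≤ z I ∧ z I ≤ 1)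
      ∧ (∀ a ∈ D.arcs, z a.1 ≤ z a.2)
      ∧ (∀ I ∈ D.nodes, ¬ IsSingleton I →
          z I + ∑ J ∈ succOf D.arcs I, (1 - z J) ≥ 1) }

/-- The projected relaxation `P_T(D)`: the orthogonal projection of `P(D)` onto the
coordinates indexed by `T ∪ S` (`S` = singletons). -/
def projRelax {V : Type} [Fintype V] [DecidableEq V] (D : RecLin V)
    (T : Finset (Finset V)) : Set (Finset V → ℝ) :=
  { z | ∃ w ∈ relax D, ∀ I : Finset V, (I ∈ T ∨ IsSingleton I) → w I = z I }

/-- `D` is a recursive linearization of the hypergraph `G = (V, E)`. -/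
def RecLinOf {V : Type} [Fintype V] [DecidableEq V] (D : RecLin V)
    (E : Finset (Finset V)) : Prop :=
  E ⊆ D.nodes ∧ ∀ I ∈ D.nodes, (∀ a ∈ D.arcs, a.2 ≠ I) → (I ∈ E ∨ IsSingleton I)

/-- `D` is partitioning: the successors of every node are pairwise disjoint. -/
def Partitioning {V : Type} [Fintype V] [DecidableEq V] (D : RecLin V) : Prop :=
  ∀ I ∈ D.nodes, ∀ J ∈ succOf D.arcs I, ∀ J' ∈ succOf D.arcs I, J ≠ J' → J ∩ J' = ∅

/-- `D` is binary: every non-singleton node has exactly two successors. -/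
def Binary {V : Type} [Fintype V] [DecidableEq V] (D : RecLin V) : Prop :=
  ∀ I ∈ D.nodes, ¬ IsSingleton I → (succOf D.arcs I).card = 2

/-- A recursive McCormick linearization is partitioning and binary. -/
def McCormick {V : Type} [Fintype V] [DecidableEq V] (D : RecLin V) : Prop :=
  Partitioning D ∧ Binary D

/-- The extended flower relaxation of the hypergraph `G = (V, E)`, as a subset of
`ℝ^{Finset V}` constraining only the coordinates indexed by `E ∪ S`. -/
def flowerRel {V : Type} [Fintype V] [DecidableEq V] (E : Finset (Finset V)) :
    Set (Finset V → ℝ) :=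
  { z | (∀ I : Finset V, (I ∈ E ∨ IsSingleton I) → 0 ≤ z I ∧ z I ≤ 1)
      ∧ (∀ I ∈ E, ∀ v ∈ I, z I ≤ z {v})
      ∧ (∀ I ∈ E, ∀ k : ℕ, ∀ J : Fin k → Finset V,
          (∀ i, J i ∈ E ∨ IsSingleton (J i)) →
          I ⊆ Finset.univ.biUnion J →
          (∀ i, (J i ∩ I).Nonempty) →
          z I + ∑ i, (1 - z (J i)) ≥ 1) }

/-- The multilinear polytope `ML(G)`: the convex hull of the 0/1 points whose
`E`-coordinates are the products of the corresponding singleton coordinates. -/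
def ML {V : Type} [Fintype V] [DecidableEq V] (E : Finset (Finset V)) :
    Set (Finset V → ℝ) :=
  convexHull ℝ { z : Finset V → ℝ |
    (∀ I : Finset V, (I ∈ E ∨ IsSingleton I) → z I = 0 ∨ z I = 1)
    ∧ ∀ I ∈ E, z I = ∏ v ∈ I, z {v} }

/-- For every hypergraph `G = (V, E)`, the multilinear polytope is
contained in the extended flower relaxation: `ML(G) ⊆ flowerRel(G)`. -/
theorem ML_subset_flowerRel {V : Type} [Fintype V] [DecidableEq V]
    (E : Finset (Finset V)) (hE : ∀ I ∈ E, 2 ≤ I.card) :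
    ML E ⊆ flowerRel E := by
  have hconv : Convex ℝ (flowerRel E) := by
    intro z1 h1 z2 h2 a b ha hb hab
    obtain ⟨h1a, h1b, h1c⟩ := h1
    obtain ⟨h2a, h2b, h2c⟩ := h2
    refine ⟨?_, ?_, ?_⟩
    · intro I hI
      obtain ⟨hx0, hx1⟩ := h1a I hI
      obtain ⟨hy0, hy1⟩ := h2a I hI
      simp only [Pi.add_apply, Pi.smul_apply, smul_eq_mul]
      constructor
      · positivity
      · nlinarith
    · intro I hI v hv
      simp only [Pi.add_apply, Pi.smul_apply, smul_eq_mul]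
      exact add_le_add (mul_le_mul_of_nonneg_left (h1b I hI v hv) ha)
        (mul_le_mul_of_nonneg_left (h2b I hI v hv) hb)
    · intro I hI k J hJ hcov hmeet
      have e1 := h1c I hI k J hJ hcov hmeet
      have e2 := h2c I hI k J hJ hcov hmeet
      simp only [Pi.add_apply, Pi.smul_apply, smul_eq_mul]
      have hs : ∑ i, (1 - (a * z1 (J i) + b * z2 (J i)))
          = a * ∑ i, (1 - z1 (J i)) + b * ∑ i, (1 - z2 (J i)) := by
        rw [Finset.mul_sum, Finset.mul_sum, ← Finset.sum_add_distrib]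
        refine Finset.sum_congr rfl fun i _ => ?_
        have : a * (1 - z1 (J i)) + b * (1 - z2 (J i))
            = (a + b) - (a * z1 (J i) + b * z2 (J i)) := by ring
        rw [this, hab]
      rw [hs]
      have := mul_le_mul_of_nonneg_left e1 ha
      have := mul_le_mul_of_nonneg_left e2 hb
      nlinarith
  apply convexHull_min _ hconv
  rintro z ⟨hz01, hzprod⟩
  have hbnd : ∀ I : Finset V, (I ∈ E ∨ IsSingleton I) → 0 ≤ z I ∧ z I ≤ 1 := by
    intro I hI
    rcases hz01 I hI with h | h <;> rw [h] <;> norm_num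
  refine ⟨hbnd, ?_, ?_⟩
  · intro I hI v hv
    rcases hz01 {v} (Or.inr ⟨v, rfl⟩) with h | h
    · rw [h]
      have := hzprod I hI
      rw [this]
      exact le_of_eq (Finset.prod_eq_zero hv h)
    · rw [h]; exact (hbnd I (Or.inl hI)).2
  · intro I hI k J hJ hcov hmeet
    rcases hz01 I (Or.inl hI) with hz0 | hz1
    · -- z I = 0 : some v ∈ I with z {v} = 0, find i with v ∈ J i, z (J i) = 0
      have hprod : ∏ v ∈ I, z {v} = 0 := by rw [← hzprod I hI, hz0]
      obtain ⟨v, hvI, hv0⟩ := Finset.prod_eq_zero_iff.mp hprod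
      have hvJ : v ∈ Finset.univ.biUnion J := hcov hvI
      obtain ⟨i, -, hvJi⟩ := Finset.mem_biUnion.mp hvJ
      have hJi0 : z (J i) = 0 := by
        rcases hJ i with hJE | ⟨w, hw⟩
        · rw [hzprod (J i) hJE]
          exact Finset.prod_eq_zero hvJi hv0
        · rw [hw] at hvJi ⊢
          rw [Finset.mem_singleton] at hvJi
          rw [← hvJi]; exact hv0
      have hterm : ∀ j ∈ (Finset.univ : Finset (Fin k)), (0:ℝ) ≤ 1 - z (J j) := by
        intro j _
        have := (hbnd (J j) (hJ j)).2
        linarith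
      have hle : (1 : ℝ) - z (J i) ≤ ∑ j, (1 - z (J j)) :=
        Finset.single_le_sum hterm (Finset.mem_univ i)
      rw [hz0, hJi0] at *
      linarith
    · have hterm : ∀ j ∈ (Finset.univ : Finset (Fin k)), (0:ℝ) ≤ 1 - z (J j) := by
        intro j _
        have := (hbnd (J j) (hJ j)).2
        linarith
      have := Finset.sum_nonneg hterm
      rw [hz1]
      linarith
end

section
/- Let G = (V, E) be a hypergraph, let I* ∈ E, let E' := E \ {I*}, and let G' := (V, E'). Then the orthogonal projection of flowerRel(G) onto the coordinates indexed by E' ∪ S equals flowerRel(G'). -/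
/-!
Extending a point `z` of `flowerRel (E.erase I*)` to `flowerRel E` amounts to choosing the
coordinate `z I*`. The flower inequalities centred at `I*` bound it from below; the inequalities
`z I* ≤ z {v}` and the flower inequalities with `I*` among the neighbours bound it from above.
Every lower bound lies below every upper bound: gluing a flower centred at `I*` into a flower
centred at `I`, in place of the neighbour `I*`, gives a flower of `E.erase I*` centred at `I`.
Hence the largest lower bound (or `0`) is a valid choice.
-/

open Finset

section Flower

variable {V : Type} [DecidableEq V]

/-- The neighbours `J₁, …, Jₖ` of an extended flower centred at `I` in `(V, E)`, taken as a set: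
repeating a neighbour only weakens the flower inequality. -/
def IsFlower (E : Finset (Finset V)) (I : Finset V) (𝒥 : Finset (Finset V)) : Prop :=
  (∀ J ∈ 𝒥, J ∈ E ∨ IsSingleton J) ∧ I ⊆ 𝒥.biUnion id ∧ ∀ J ∈ 𝒥, (J ∩ I).Nonempty

namespace IsFlower

variable {E : Finset (Finset V)} {I P : Finset V} {𝒥 𝒦 : Finset (Finset V)}

theorem mem_of_mem_erase (h : IsFlower (insert P E) I 𝒥) {J : Finset V} (hJ : J ∈ 𝒥.erase P) :
    J ∈ E ∨ IsSingleton J :=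
  (h.1 J (Finset.mem_of_mem_erase hJ)).imp_left
    fun hJE => (mem_insert.1 hJE).resolve_left (ne_of_mem_erase hJ)

theorem of_insert (h : IsFlower (insert P E) I 𝒥) (hP : P ∉ 𝒥) : IsFlower E I 𝒥 :=
  ⟨fun _ hJ => h.mem_of_mem_erase (mem_erase.2 ⟨ne_of_mem_of_not_mem hJ hP, hJ⟩), h.2⟩

theorem erase_union_filter (h : IsFlower (insert P E) I 𝒥) (hP : IsFlower E P 𝒦) :
    IsFlower E I (𝒥.erase P ∪ 𝒦.filter fun K => (K ∩ I).Nonempty) := by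
  refine ⟨fun J hJ => ?_, fun v hv => ?_, fun J hJ => ?_⟩
  · rcases mem_union.1 hJ with hJ | hJ
    · exact h.mem_of_mem_erase hJ
    · exact hP.1 J (mem_filter.1 hJ).1
  · obtain ⟨J, hJ, hvJ⟩ := mem_biUnion.1 (h.2.1 hv)
    by_cases hJP : J = P
    · obtain ⟨K, hK, hvK⟩ := mem_biUnion.1 (hP.2.1 (hJP ▸ hvJ))
      exact mem_biUnion.2 ⟨K, mem_union_right _ (mem_filter.2 ⟨hK, v, mem_inter.2 ⟨hvK, hv⟩⟩), hvK⟩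
    · exact mem_biUnion.2 ⟨J, mem_union_left _ (mem_erase.2 ⟨hJP, hJ⟩), hvJ⟩
  · rcases mem_union.1 hJ with hJ | hJ
    · exact h.2.2 J (Finset.mem_of_mem_erase hJ)
    · exact (mem_filter.1 hJ).2

end IsFlower

end Flower

section Update

variable {α : Type} [DecidableEq α] {f : α → ℝ} {s : Finset α} {a : α}

theorem sum_one_sub_update_of_mem (ha : a ∈ s) (b : ℝ) :
    ∑ x ∈ s, (1 - Function.update f a b x) = (1 - b) + ∑ x ∈ s.erase a, (1 - f x) := by
  rw [← add_sum_erase _ _ ha, Function.update_self]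
  exact congrArg _ (sum_congr rfl fun x hx => by rw [Function.update_of_ne (ne_of_mem_erase hx)])

theorem sum_one_sub_update_of_notMem (ha : a ∉ s) (b : ℝ) :
    ∑ x ∈ s, (1 - Function.update f a b x) = ∑ x ∈ s, (1 - f x) :=
  sum_congr rfl fun x hx => by rw [Function.update_of_ne (ne_of_mem_of_not_mem hx ha)]

end Update

section FlowerRel

variable {V : Type} [Fintype V] [DecidableEq V] {E : Finset (Finset V)} {z : Finset V → ℝ}
  {I P : Finset V} {𝒥 𝒦 : Finset (Finset V)}

theorem mem_flowerRel_iff : z ∈ flowerRel E ↔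
    (∀ I, (I ∈ E ∨ IsSingleton I) → 0 ≤ z I ∧ z I ≤ 1) ∧ (∀ I ∈ E, ∀ v ∈ I, z I ≤ z {v}) ∧
      ∀ I ∈ E, ∀ 𝒥, IsFlower E I 𝒥 → 1 ≤ z I + ∑ J ∈ 𝒥, (1 - z J) := by
  refine and_congr_right fun hbd => and_congr_right fun _ => forall₂_congr fun I hI => ?_
  constructor
  · rintro hf 𝒥 ⟨hmem, hcov, hmeet⟩
    let e := 𝒥.equivFin
    have hsum : ∑ i, (1 - z (e.symm i)) = ∑ J ∈ 𝒥, (1 - z J) :=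
      (Equiv.sum_comp e.symm fun J => 1 - z J).trans (sum_coe_sort 𝒥 fun J => 1 - z J)
    refine hsum ▸ hf 𝒥.card (fun i => e.symm i) (fun i => hmem _ (e.symm i).2)
      (fun v hv => ?_) (fun i => hmeet _ (e.symm i).2)
    obtain ⟨J, hJ, hvJ⟩ := mem_biUnion.1 (hcov hv)
    exact mem_biUnion.2 ⟨e ⟨J, hJ⟩, mem_univ _, by simpa using hvJ⟩
  · intro hf k J hJ hcov hmeet
    have hflower : IsFlower E I (univ.image J) :=
      ⟨by simpa using hJ, by simpa [image_biUnion] using hcov, by simpa using hmeet⟩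
    calc 1 ≤ z I + ∑ K ∈ univ.image J, (1 - z K) := hf _ hflower
      _ ≤ z I + ∑ i, (1 - z (J i)) := by
        gcongr
        refine sum_image_le_of_nonneg fun K hK => sub_nonneg.2 (hbd K ?_).2
        exact hflower.1 K hK

theorem mem_flowerRel_of_subset {E' : Finset (Finset V)} {w : Finset V → ℝ} (hE : E' ⊆ E)
    (hw : w ∈ flowerRel E) (hwz : ∀ I, (I ∈ E' ∨ IsSingleton I) → w I = z I) :
    z ∈ flowerRel E' := by
  obtain ⟨hbd, hmono, hf⟩ := hw
  have hE' : ∀ I, (I ∈ E' ∨ IsSingleton I) → I ∈ E ∨ IsSingleton I :=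
    fun I => Or.imp_left (@hE I)
  refine ⟨fun I hI => hwz I hI ▸ hbd I (hE' I hI), fun I hI v hv => ?_,
    fun I hI k J hJ hcov hmeet => ?_⟩
  · rw [← hwz I (.inl hI), ← hwz {v} (.inr ⟨v, rfl⟩)]
    exact hmono I (hE hI) v hv
  · rw [← hwz I (.inl hI), ← sum_congr rfl fun i _ => congrArg (1 - ·) (hwz _ (hJ i))]
    exact hf I (hE hI) k J (fun i => hE' _ (hJ i)) hcov hmeet

theorem sum_one_sub_nonneg (hz : z ∈ flowerRel E) (h𝒥 : ∀ J ∈ 𝒥, J ∈ E ∨ IsSingleton J) :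
    0 ≤ ∑ J ∈ 𝒥, (1 - z J) :=
  sum_nonneg fun J hJ => sub_nonneg.2 (hz.1 J (h𝒥 J hJ)).2

open Classical in
/-- The least value of the `P`-coordinate that is nonnegative and satisfies every flower
inequality centred at `P` in `(V, E)`. -/
noncomputable def flowerBound (E : Finset (Finset V)) (z : Finset V → ℝ) (P : Finset V) : ℝ :=
  (insert 0 ((univ.filter (IsFlower E P)).image fun 𝒦 => 1 - ∑ K ∈ 𝒦, (1 - z K))).max'
    (insert_nonempty _ _)

theorem flowerBound_nonneg : 0 ≤ flowerBound E z P :=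
  le_max' _ _ (mem_insert_self _ _)

open Classical in
theorem one_sub_sum_le_flowerBound (h : IsFlower E P 𝒦) :
    1 - ∑ K ∈ 𝒦, (1 - z K) ≤ flowerBound E z P := by
  unfold flowerBound
  refine le_max' _ _ (mem_insert_of_mem ?_)
  exact mem_image_of_mem _ (mem_filter.2 ⟨mem_univ _, h⟩)

open Classical in
theorem flowerBound_le {b : ℝ} (h0 : 0 ≤ b)
    (h : ∀ 𝒦, IsFlower E P 𝒦 → 1 - ∑ K ∈ 𝒦, (1 - z K) ≤ b) : flowerBound E z P ≤ b := by
  refine max'_le _ _ _ fun r hr => ?_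
  rcases mem_insert.1 hr with rfl | hr
  · exact h0
  · obtain ⟨𝒦, h𝒦, rfl⟩ := mem_image.1 hr
    exact h 𝒦 (mem_filter.1 h𝒦).2

theorem flowerBound_le_one (hz : z ∈ flowerRel E) : flowerBound E z P ≤ 1 :=
  flowerBound_le zero_le_one fun _ h => by linarith [sum_one_sub_nonneg hz h.1]

theorem flowerBound_le_singleton (hz : z ∈ flowerRel E) {v : V} (hv : v ∈ P) :
    flowerBound E z P ≤ z {v} := by
  refine flowerBound_le (hz.1 _ (.inr ⟨v, rfl⟩)).1 fun 𝒦 ⟨hmem, hcov, _⟩ => ?_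
  obtain ⟨K, hK, hvK⟩ := mem_biUnion.1 (hcov hv)
  have hKv : z K ≤ z {v} := by
    rcases hmem K hK with hKE | ⟨u, rfl⟩
    · exact hz.2.1 K hKE v hvK
    · rw [mem_singleton.1 hvK]
  have hK_le := single_le_sum (fun J hJ => sub_nonneg.2 (hz.1 J (hmem J hJ)).2) hK
  linarith

theorem flowerBound_le_of_isFlower_insert (hz : z ∈ flowerRel E) (hI : I ∈ E)
    (h𝒥 : IsFlower (insert P E) I 𝒥) :
    flowerBound E z P ≤ z I + ∑ J ∈ 𝒥.erase P, (1 - z J) := by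
  refine flowerBound_le
    (add_nonneg (hz.1 I (.inl hI)).1 (sum_one_sub_nonneg hz fun _ => h𝒥.mem_of_mem_erase))
    fun 𝒦 h𝒦 => ?_
  set 𝒦' := 𝒦.filter fun K => (K ∩ I).Nonempty
  have hflower := h𝒥.erase_union_filter h𝒦
  have hunion := sum_union_inter (s₁ := 𝒥.erase P) (s₂ := 𝒦') (f := fun J => 1 - z J)
  have hinter : 0 ≤ ∑ J ∈ 𝒥.erase P ∩ 𝒦', (1 - z J) :=
    sum_one_sub_nonneg hz fun J hJ => hflower.1 J (mem_union_left _ (mem_of_mem_inter_left hJ))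
  have hfilter : ∑ K ∈ 𝒦', (1 - z K) ≤ ∑ K ∈ 𝒦, (1 - z K) :=
    sum_le_sum_of_subset_of_nonneg (filter_subset _ _)
      fun K hK _ => sub_nonneg.2 (hz.1 K (h𝒦.1 K hK)).2
  linarith [(mem_flowerRel_iff.1 hz).2.2 I hI _ hflower]

theorem update_flowerBound_mem_flowerRel_insert (hz : z ∈ flowerRel E) (hP : ¬ IsSingleton P) :
    Function.update z P (flowerBound E z P) ∈ flowerRel (insert P E) := by
  set t := flowerBound E z P
  set w := Function.update z P t
  have hwP : w P = t := Function.update_self ..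
  have hw : ∀ J ≠ P, w J = z J := fun J hJ => Function.update_of_ne hJ _ _
  have hw1 : ∀ v, w {v} = z {v} := fun v => hw _ fun h => hP ⟨v, h.symm⟩
  have hE : ∀ J ∈ insert P E, J ≠ P → J ∈ E := fun J hJ hJP => (mem_insert.1 hJ).resolve_left hJP
  obtain ⟨hbd, hmono, hf⟩ := mem_flowerRel_iff.1 hz
  refine mem_flowerRel_iff.2 ⟨fun I hI => ?_, fun I hI v hv => ?_, fun I hI 𝒥 h𝒥 => ?_⟩
  · by_cases hIP : I = P
    · rw [hIP, hwP]
      exact ⟨flowerBound_nonneg, flowerBound_le_one hz⟩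
    · rw [hw I hIP]
      exact hbd I (hI.imp_left (hE I · hIP))
  · rw [hw1]
    by_cases hIP : I = P
    · rw [hIP, hwP]
      exact flowerBound_le_singleton hz (hIP ▸ hv)
    · rw [hw I hIP]
      exact hmono I (hE I hI hIP) v hv
  · by_cases hP𝒥 : P ∈ 𝒥
    · rw [sum_one_sub_update_of_mem hP𝒥]
      by_cases hIP : I = P
      · rw [hIP, hwP]
        linarith [sum_one_sub_nonneg hz fun _ => h𝒥.mem_of_mem_erase]
      · rw [hw I hIP]
        linarith [flowerBound_le_of_isFlower_insert hz (hE I hI hIP) h𝒥]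
    · rw [sum_one_sub_update_of_notMem hP𝒥]
      by_cases hIP : I = P
      · rw [hIP, hwP]
        linarith [one_sub_sum_le_flowerBound (z := z) (hIP ▸ h𝒥.of_insert hP𝒥)]
      · rw [hw I hIP]
        exact hf I (hE I hI hIP) 𝒥 (h𝒥.of_insert hP𝒥)

end FlowerRel

/-- the orthogonal projection of `flowerRel(G)` onto the coordinates
indexed by `E' ∪ S`, where `E' = E \ {I*}`, equals `flowerRel(G')`. -/
theorem flowerRel_projection {V : Type} [Fintype V] [DecidableEq V]
    (E : Finset (Finset V)) (hE : ∀ I ∈ E, 2 ≤ I.card)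
    (Istar : Finset V) (hIstar : Istar ∈ E) :
    { z : Finset V → ℝ | ∃ w ∈ flowerRel E,
        ∀ I : Finset V, (I ∈ E.erase Istar ∨ IsSingleton I) → w I = z I }
      = flowerRel (E.erase Istar) := by
  have hIstar_ne : ∀ I, (I ∈ E.erase Istar ∨ IsSingleton I) → I ≠ Istar := by
    rintro I (hI | ⟨v, rfl⟩) rfl
    · exact notMem_erase _ _ hI
    · simpa using hE _ hIstar
  ext z
  refine ⟨fun ⟨w, hw, hwz⟩ => mem_flowerRel_of_subset (erase_subset _ _) hw hwz, fun hz => ?_⟩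
  refine ⟨Function.update z Istar (flowerBound (E.erase Istar) z Istar), ?_,
    fun I hI => Function.update_of_ne (hIstar_ne I hI) _ _⟩
  simpa [insert_erase hIstar] using
    update_flowerBound_mem_flowerRel_insert hz fun h => hIstar_ne Istar (.inr h) rfl
end

section
/- Let G = (V, E) be a hypergraph, let I* ∈ E with H_1, …, H_k ∈ E ∪ S satisfying H_1 ∪ … ∪ H_k ⊇ I* and H_i ∩ I* ≠ ∅ for all i, and let J ∈ E with K_1, …, K_ℓ ∈ E ∪ S satisfying I* ∪ K_1 ∪ … ∪ K_ℓ ⊇ J, I* ∩ J ≠ ∅, and K_i ∩ J ≠ ∅ for all i. Let A := {i ∈ {1,…,k} : H_i ∩ J ≠ ∅}. Then: (a) the sets (H_i)_{i∈A} together with K_1, …, K_ℓ cover J and each of them intersects J, so they form a valid neighbor set for an extended flower inequality centered at J; and (b) every z ∈ [0,1]^{E∪S} satisfying the extended flower inequality centered at J with neighbors (H_i)_{i∈A}, K_1, …, K_ℓ also satisfies z_J + Σ_{i=1}^k (1 − z_{H_i}) + Σ_{i=1}^ℓ (1 − z_{K_i}) ≥ 1, which is the sum of the extended flower inequality centered at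 I* with neighbors H_1, …, H_k and the one centered at J with neighbors I*, K_1, …, K_ℓ after cancelling z_{I*}. -/
open Finset

/-- the Fourier–Motzkin combination of two extended flower inequalities
sharing the variable `z_{I*}` (with opposite signs) is implied by a single extended
flower inequality centered at `J` together with bound inequalities. -/
theorem fourier_motzkin_flower {V : Type} [Fintype V] [DecidableEq V]
    (E : Finset (Finset V)) (hE : ∀ I ∈ E, 2 ≤ I.card)
    (Istar : Finset V) (hIstar : Istar ∈ E)
    (k : ℕ) (H : Fin k → Finset V)
    (hHmem : ∀ i, H i ∈ E ∨ IsSingleton (H i))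
    (hHcover : Istar ⊆ Finset.univ.biUnion H)
    (hHinter : ∀ i, (H i ∩ Istar).Nonempty)
    (J : Finset V) (hJ : J ∈ E)
    (l : ℕ) (K : Fin l → Finset V)
    (hKmem : ∀ i, K i ∈ E ∨ IsSingleton (K i))
    (hKcover : J ⊆ Istar ∪ Finset.univ.biUnion K)
    (hIJ : (Istar ∩ J).Nonempty)
    (hKinter : ∀ i, (K i ∩ J).Nonempty) :
    -- (a) the `H i` meeting `J`, together with the `K i`, form a valid neighbor set
    -- for an extended flower inequality centered at `J`:
    (J ⊆ ((Finset.univ.filter fun i : Fin k => (H i ∩ J).Nonempty).biUnion H)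
        ∪ Finset.univ.biUnion K)
    ∧ (∀ i ∈ Finset.univ.filter fun i : Fin k => (H i ∩ J).Nonempty, (H i ∩ J).Nonempty)
    -- (b) this extended flower inequality implies the summed inequality:
    ∧ (∀ z : Finset V → ℝ,
        (∀ I : Finset V, (I ∈ E ∨ IsSingleton I) → 0 ≤ z I ∧ z I ≤ 1) →
        z J + (∑ i ∈ Finset.univ.filter fun i : Fin k => (H i ∩ J).Nonempty, (1 - z (H i)))
            + (∑ i, (1 - z (K i))) ≥ 1 →
        z J + (∑ i, (1 - z (H i))) + (∑ i, (1 - z (K i))) ≥ 1) := by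
  refine ⟨?_, fun i hi => (Finset.mem_filter.mp hi).2, ?_⟩
  · intro v hv
    rcases Finset.mem_union.mp (hKcover hv) with hvI | hvK
    · rcases Finset.mem_biUnion.mp (hHcover hvI) with ⟨i, -, hiv⟩
      exact Finset.mem_union_left _ (Finset.mem_biUnion.mpr
        ⟨i, Finset.mem_filter.mpr ⟨Finset.mem_univ _, ⟨v, Finset.mem_inter.mpr ⟨hiv, hv⟩⟩⟩, hiv⟩)
    · exact Finset.mem_union_right _ hvK
  · intro z hz h
    refine le_trans h ?_
    have hs : (∑ i ∈ Finset.univ.filter fun i : Fin k => (H i ∩ J).Nonempty, (1 - z (H i)))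
        ≤ ∑ i, (1 - z (H i)) := by
      apply Finset.sum_le_sum_of_subset_of_nonneg (Finset.filter_subset _ _)
      intro i _ _
      have := (hz (H i) (hHmem i)).2
      linarith
    linarith
end

section
/- Let D = (𝒱, 𝒜) be a recursive linearization over a finite ground set V and let I*, J* ∈ 𝒱. Then the inequality z_{I*} ≤ z_{J*} holds for every z ∈ P(D) if and only if D contains a directed path (possibly of length zero) from I* to J*. -/
open Finset

/-- `z_{I*} ≤ z_{J*}` is valid for `P(D)` iff `D` has a directed path
(possibly of length zero) from `I*` to `J*`. -/
theorem valid_iff_path {V : Type} [Fintype V] [DecidableEq V] (D : RecLin V)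
    (Istar Jstar : Finset V) (hI : Istar ∈ D.nodes) (hJ : Jstar ∈ D.nodes) :
    (∀ z ∈ relax D, z Istar ≤ z Jstar) ↔
      Relation.ReflTransGen (fun I J => (I, J) ∈ D.arcs) Istar Jstar := by
  classical
  set r : Finset V → Finset V → Prop := fun I J => (I, J) ∈ D.arcs with hr
  have hsucc_arc : ∀ I J : Finset V, J ∈ succOf D.arcs I ↔ (I, J) ∈ D.arcs := by
    intro I J
    simp only [succOf, Finset.mem_image, Finset.mem_filter]
    constructor
    · rintro ⟨a, ⟨ha, rfl⟩, rfl⟩; exact ha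
    · intro h; exact ⟨(I, J), ⟨h, rfl⟩, rfl⟩
  constructor
  · intro hvalid
    by_contra hpath
    set z : Finset V → ℝ := fun I =>
      if Relation.ReflTransGen r Istar I then 3/4 else 1/2 with hzdef
    have hz : z ∈ relax D := by
      refine ⟨?_, ?_, ?_⟩
      · intro I _
        simp only [hzdef]
        constructor <;> (split <;> norm_num)
      · intro a ha
        by_cases h1 : Relation.ReflTransGen r Istar a.1
        · have h2 : Relation.ReflTransGen r Istar a.2 := h1.tail ha
          simp only [hzdef, if_pos h1, if_pos h2]
          exact le_refl _
        · simp only [hzdef, if_neg h1]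
          split <;> norm_num
      · intro I hI hns
        have hne : I.Nonempty := D.nodes_nonempty I hI
        have hu := D.succ_union I hI hns
        have hcard : 2 ≤ (succOf D.arcs I).card := by
          by_contra hlt
          push_neg at hlt
          have h1 : (succOf D.arcs I).card ≤ 1 := by omega
          obtain ⟨J, hsubJ⟩ := Finset.card_le_one_iff_subset_singleton.mp h1
          have hIsub : I ⊆ J := by
            intro v hv
            rw [← hu] at hv
            obtain ⟨K, hK, hvK⟩ := Finset.mem_biUnion.mp hv
            have hKJ : K = J := Finset.mem_singleton.mp (hsubJ hK)
            simpa [hKJ] using hvK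
          obtain ⟨v, hv⟩ := hne
          rw [← hu] at hv
          obtain ⟨K, hK, _⟩ := Finset.mem_biUnion.mp hv
          have hKJ : K = J := Finset.mem_singleton.mp (hsubJ hK)
          have hJmem : J ∈ succOf D.arcs I := hKJ ▸ hK
          have harc : (I, J) ∈ D.arcs := (hsucc_arc I J).mp hJmem
          have hJI : J = I :=
            subset_antisymm (D.arcs_subset _ harc) hIsub
          exact D.no_loops (I, J) harc hJI.symm
        have hterm : ∀ J ∈ succOf D.arcs I, (1/4 : ℝ) ≤ 1 - z J := by
          intro J _
          simp only [hzdef]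
          split <;> norm_num
        have hsum : (succOf D.arcs I).card • (1/4 : ℝ) ≤
            ∑ J ∈ succOf D.arcs I, (1 - z J) :=
          Finset.card_nsmul_le_sum _ _ _ hterm
        have hzI : (1/2 : ℝ) ≤ z I := by
          simp only [hzdef]
          split <;> norm_num
        have hc2 : (2 : ℝ) ≤ ((succOf D.arcs I).card : ℝ) := by exact_mod_cast hcard
        rw [nsmul_eq_mul] at hsum
        have : (1/2 : ℝ) ≤ ∑ J ∈ succOf D.arcs I, (1 - z J) := by nlinarith
        linarith
    have hle := hvalid z hz
    have hzI : z Istar = 3/4 := by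
      simp only [hzdef, if_pos Relation.ReflTransGen.refl]
    have hzJ : z Jstar = 1/2 := by
      simp only [hzdef, if_neg hpath]
    rw [hzI, hzJ] at hle
    norm_num at hle
  · intro hp z hz
    clear hI hJ
    induction hp with
    | refl => exact le_refl _
    | tail _ hbc ih => exact le_trans ih (hz.2.1 _ hbc)
end

section
/- Let D = (𝒱, 𝒜) be a recursive linearization over a finite ground set V and let J* ∈ 𝒱. Define z ∈ ℝ^{𝒱} by z_I := 0 if D contains a directed path (possibly of length zero) from I to J*, and z_I := 1/2 otherwise. Then z ∈ P(D). -/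
open Finset

open Classical in
/-- the point that is `0` on nodes having a directed path to `J*` and
`1/2` elsewhere belongs to `P(D)`. -/
theorem half_point_mem_relax {V : Type} [Fintype V] [DecidableEq V] (D : RecLin V)
    (Jstar : Finset V) (hJ : Jstar ∈ D.nodes)
    (z : Finset V → ℝ)
    (hz : ∀ I : Finset V,
      z I = if Relation.ReflTransGen (fun A B => (A, B) ∈ D.arcs) I Jstar
            then 0 else 1/2) :
    z ∈ relax D := by
  have hz01 : ∀ I, z I = 0 ∨ z I = 1/2 := by
    intro I; rw [hz]; split <;> simp
  refine ⟨?_, ?_, ?_⟩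
  · intro I _
    rcases hz01 I with h | h <;> rw [h] <;> norm_num
  · intro a ha
    rw [hz, hz]
    by_cases h2 : Relation.ReflTransGen (fun A B => (A, B) ∈ D.arcs) a.2 Jstar
    · rw [if_pos (Relation.ReflTransGen.head ha h2), if_pos h2]
    · rw [if_neg h2]
      split <;> norm_num
  · intro I hI hns
    have hzI : 0 ≤ z I := by rcases hz01 I with h | h <;> rw [h] <;> norm_num
    have hun := D.succ_union I hI hns
    have hne : (succOf D.arcs I).Nonempty := by
      rcases D.nodes_nonempty I hI with ⟨v, hv⟩
      rw [← hun] at hv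
      rcases Finset.mem_biUnion.1 hv with ⟨J, hJ', _⟩
      exact ⟨J, hJ'⟩
    have hcard : 2 ≤ (succOf D.arcs I).card := by
      rcases Nat.lt_or_ge (succOf D.arcs I).card 2 with h | h
      · exfalso
        interval_cases h' : (succOf D.arcs I).card
        · exact absurd h' (Finset.card_ne_zero_of_mem hne.choose_spec)
        · rcases Finset.card_eq_one.1 h' with ⟨J, hJeq⟩
          have hJmem : J ∈ succOf D.arcs I := by rw [hJeq]; exact Finset.mem_singleton_self J
          rcases Finset.mem_image.1 hJmem with ⟨a, haf, ha2⟩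
          rcases Finset.mem_filter.1 haf with ⟨haA, ha1⟩
          have : I = J := by
            rw [← hun, hJeq]; simp
          exact D.no_loops a haA (by rw [ha1, ha2, this])
      · exact h
    have hsum : (1:ℝ) ≤ ∑ J ∈ succOf D.arcs I, (1 - z J) := by
      have h1 : ((succOf D.arcs I).card : ℝ) * (1/2) ≤ ∑ J ∈ succOf D.arcs I, (1 - z J) := by
        rw [← nsmul_eq_mul]
        apply Finset.card_nsmul_le_sum
        intro J _
        rcases hz01 J with h | h <;> rw [h] <;> norm_num
      have h2 : (1:ℝ) ≤ ((succOf D.arcs I).card : ℝ) * (1/2) := by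
        have : (2:ℝ) ≤ ((succOf D.arcs I).card : ℝ) := by exact_mod_cast hcard
        linarith
      linarith
    linarith
end

section
/- Let V = {1,2,3,4,5,6}, E = {{1,2,3,4,5,6}, {1,2}, {3,4}, {5,6}, {1,2,3,4}, {1,2,5,6}, {3,4,5,6}, {1,3}, {2,4}, {1,5}, {2,6}, {3,5}, {4,6}}, and let D₀ be the recursive linearization with node set E ∪ S and arcs ({1,2,3,4,5,6},{1,2}), ({1,2,3,4,5,6},{3,4}), ({1,2,3,4,5,6},{5,6}), ({1,2,3,4},{1,3}), ({1,2,3,4},{2,4}), ({1,2,5,6},{1,5}), ({1,2,5,6},{2,6}), ({3,4,5,6},{3,5}), ({3,4,5,6},{4,6}), and arcs from each of the two-element nodes {1,2}, {3,4}, {5,6}, {1,3}, {2,4}, {1,5}, {2,6}, {3,5}, {4,6} to the singletons of their two elements. Then every recursive linearization D over ground set V with E ⊆ 𝒱(D) and P_E(D) ⊆ P(D₀) is non-binary, i.e., D has a non-singleton node with at least three successors. -/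
open Finset

set_option maxRecDepth 2000

/-- The hypergraph of Figure (b): `V = {1,…,6}` (encoded as `Fin 6` via `i ↦ i-1`). -/
def E7 : Finset (Finset (Fin 6)) :=
  {{0,1,2,3,4,5}, {0,1}, {2,3}, {4,5}, {0,1,2,3}, {0,1,4,5}, {2,3,4,5},
   {0,2}, {1,3}, {0,4}, {1,5}, {2,4}, {3,5}}

/-- The non-binary recursive linearization `D₀` of Figure (b). -/
def D7 : RecLin (Fin 6) where
  nodes := {{0,1,2,3,4,5}, {0,1}, {2,3}, {4,5}, {0,1,2,3}, {0,1,4,5}, {2,3,4,5},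
            {0,2}, {1,3}, {0,4}, {1,5}, {2,4}, {3,5},
            {0}, {1}, {2}, {3}, {4}, {5}}
  arcs := {({0,1,2,3,4,5},{0,1}), ({0,1,2,3,4,5},{2,3}), ({0,1,2,3,4,5},{4,5}),
           ({0,1,2,3},{0,2}), ({0,1,2,3},{1,3}),
           ({0,1,4,5},{0,4}), ({0,1,4,5},{1,5}),
           ({2,3,4,5},{2,4}), ({2,3,4,5},{3,5}),
           ({0,1},{0}), ({0,1},{1}), ({2,3},{2}), ({2,3},{3}), ({4,5},{4}), ({4,5},{5}),
           ({0,2},{0}), ({0,2},{2}), ({1,3},{1}), ({1,3},{3}),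
           ({0,4},{0}), ({0,4},{4}), ({1,5},{1}), ({1,5},{5}),
           ({2,4},{2}), ({2,4},{4}), ({3,5},{3}), ({3,5},{5})}
  arcs_fst_mem := by intro a ha; fin_cases ha <;> decide
  arcs_snd_mem := by intro a ha; fin_cases ha <;> decide
  no_loops := by intro a ha; fin_cases ha <;> decide
  singleton_mem := by decide
  nodes_nonempty := by intro I hI; fin_cases hI <;> decide
  arcs_subset := by intro a ha; fin_cases ha <;> decide
  succ_union := by intro I hI; fin_cases hI <;> decide

/-!
Suppose `D` is binary; two points of `P(D)` are tested against `P(D₀)`.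

For a node `I`, the point that is `1/2` on the singletons and on the nodes reachable from `I`,
and `0` elsewhere, lies in `P(D)` because every node has exactly two successors. Its projection
satisfies `z_I ≤ z_J` for each arc `(I, J)` of `D₀` only if `J` is reachable from `I` in `D`.

The least point of `P(D)` with singleton values `11/12` satisfies `z_I ≤ 1 - |I|/12`, since
the two successors of a node cover it. The inequality of `D₀` at the ground set `V` demands
`z_V ≥ 1/2`, the three pairs below it taking the value `5/6`. But the two successors of `V`
either overlap, so that `z_V ≤ 1 - 7/12`, or, containing the three reachable pairs, split `V`
into a pair and a four-set `F ∈ E`. All four pairs of `E` inside `F` are reachable from `F`,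
which forces the successors of `F` to be two triples; hence `z_F ≤ 1/2` and `z_V ≤ 1/3`.
-/

theorem mem_succOf {V : Type} [DecidableEq V] {A : Finset (Finset V × Finset V)}
    {I J : Finset V} : J ∈ succOf A I ↔ (I, J) ∈ A := by
  simp [succOf]

theorem isSingleton_iff_card_eq_one {V : Type} {I : Finset V} : IsSingleton I ↔ I.card = 1 :=
  Finset.card_eq_one.symm

namespace RecLin

variable {V : Type} [Fintype V] [DecidableEq V] (D : RecLin V)

def Reaches : Finset V → Finset V → Prop :=
  Relation.ReflTransGen fun I J => (I, J) ∈ D.arcs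

variable {D}

theorem ssubset_of_mem_arcs {I J : Finset V} (h : (I, J) ∈ D.arcs) : J ⊂ I :=
  (D.arcs_subset _ h).ssubset_of_ne fun hJI => D.no_loops _ h hJI.symm

theorem not_isSingleton_of_mem_arcs {I J : Finset V} (h : (I, J) ∈ D.arcs) :
    ¬ IsSingleton I := by
  rintro ⟨v, rfl⟩
  obtain rfl | rfl := Finset.subset_singleton_iff.1 (D.ssubset_of_mem_arcs h).subset
  · exact (D.nodes_nonempty _ (D.arcs_snd_mem _ h)).ne_empty rfl
  · exact D.no_loops _ h rfl

theorem Reaches.subset {I K : Finset V} (h : D.Reaches I K) : K ⊆ I := by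
  induction h with
  | refl => exact subset_rfl
  | tail _ hJK ih => exact (D.arcs_subset _ hJK).trans ih

theorem Reaches.exists_succOf {I K : Finset V} (h : D.Reaches I K) (hne : K ≠ I) :
    ∃ X ∈ succOf D.arcs I, D.Reaches X K := by
  rcases Relation.ReflTransGen.cases_head h with h | ⟨X, hIX, hXK⟩
  · exact absurd h.symm hne
  · exact ⟨X, mem_succOf.2 hIX, hXK⟩

theorem Reaches.of_succOf_eq_pair {I K A B : Finset V} (h : D.Reaches I K) (hne : K ≠ I)
    (hsucc : succOf D.arcs I = {A, B}) : D.Reaches A K ∨ D.Reaches B K := by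
  obtain ⟨X, hX, hXK⟩ := h.exists_succOf hne
  rw [hsucc, Finset.mem_insert, Finset.mem_singleton] at hX
  rcases hX with rfl | rfl
  exacts [Or.inl hXK, Or.inr hXK]

theorem exists_succOf_eq_pair (hbin : Binary D) {I : Finset V} (hI : I ∈ D.nodes)
    (hns : ¬ IsSingleton I) :
    ∃ A B, A ≠ B ∧ succOf D.arcs I = {A, B} ∧ (I, A) ∈ D.arcs ∧ (I, B) ∈ D.arcs ∧
      A ∪ B = I := by
  obtain ⟨A, B, hAB, hsucc⟩ := Finset.card_eq_two.1 (hbin I hI hns)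
  have hcover := D.succ_union I hI hns
  rw [hsucc, Finset.biUnion_insert, Finset.singleton_biUnion] at hcover
  refine ⟨A, B, hAB, hsucc, mem_succOf.1 ?_, mem_succOf.1 ?_, hcover⟩ <;> simp [hsucc]

section HalfPoint

variable (D)

open Classical in
noncomputable def halfPoint (I₀ K : Finset V) : ℝ :=
  if D.Reaches I₀ K ∨ IsSingleton K then 1 / 2 else 0

variable {D}

theorem halfPoint_nonneg (I₀ K : Finset V) : 0 ≤ D.halfPoint I₀ K := by
  unfold halfPoint; split <;> norm_num

theorem halfPoint_le_half (I₀ K : Finset V) : D.halfPoint I₀ K ≤ 1 / 2 := by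
  unfold halfPoint; split <;> norm_num

theorem halfPoint_mem_relax (hbin : Binary D) (I₀ : Finset V) : D.halfPoint I₀ ∈ relax D := by
  refine ⟨fun I _ => ⟨halfPoint_nonneg I₀ I, (halfPoint_le_half I₀ I).trans (by norm_num)⟩, ?_,
    ?_⟩
  · rintro ⟨I, J⟩ hIJ
    by_cases hI : D.Reaches I₀ I
    · have hJ : D.halfPoint I₀ J = 1 / 2 := if_pos (Or.inl (hI.tail hIJ))
      exact hJ ▸ halfPoint_le_half I₀ I
    · have hI' : D.halfPoint I₀ I = 0 :=
        if_neg (not_or.2 ⟨hI, D.not_isSingleton_of_mem_arcs hIJ⟩)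
      exact hI' ▸ halfPoint_nonneg I₀ J
  · intro I hI hns
    have hsum := Finset.card_nsmul_le_sum (succOf D.arcs I) (fun J => 1 - D.halfPoint I₀ J)
      (1 / 2) fun J _ => by linarith [halfPoint_le_half (D := D) I₀ J]
    rw [hbin I hI hns, two_nsmul] at hsum
    linarith [halfPoint_nonneg (D := D) I₀ I]

theorem reaches_of_projRelax_subset {D' : RecLin V} {T : Finset (Finset V)} (hbin : Binary D)
    (hsub : projRelax D T ⊆ relax D') {I J : Finset V} (hIJ : (I, J) ∈ D'.arcs)
    (hJ : ¬ IsSingleton J) : D.Reaches I J := by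
  by_contra hnot
  have hmem := hsub ⟨D.halfPoint I, halfPoint_mem_relax hbin I, fun _ _ => rfl⟩
  have hle := hmem.2.1 (I, J) hIJ
  have hI : D.halfPoint I I = 1 / 2 := if_pos (Or.inl Relation.ReflTransGen.refl)
  have hJ' : D.halfPoint I J = 0 := if_neg (not_or.2 ⟨hnot, hJ⟩)
  rw [hI, hJ'] at hle
  norm_num at hle

end HalfPoint

section MinPoint

variable (D)

/-- The least point of `P(D)` whose singleton coordinates all equal `t`. -/
noncomputable def minPoint (t : ℝ) (I : Finset V) : ℝ :=
  if IsSingleton I then t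
  else max 0 (1 - ∑ J ∈ (succOf D.arcs I).attach, (1 - minPoint t J.1))
termination_by I.card
decreasing_by exact Finset.card_lt_card (ssubset_of_mem_arcs (mem_succOf.1 J.2))

variable {D} {t : ℝ}

theorem minPoint_of_isSingleton {I : Finset V} (h : IsSingleton I) : D.minPoint t I = t := by
  rw [minPoint, if_pos h]

theorem minPoint_of_not_isSingleton {I : Finset V} (h : ¬ IsSingleton I) :
    D.minPoint t I = max 0 (1 - ∑ J ∈ succOf D.arcs I, (1 - D.minPoint t J)) := by
  rw [minPoint, if_neg h, Finset.sum_attach (succOf D.arcs I) fun J => 1 - D.minPoint t J]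

theorem minPoint_nonneg (ht : 0 ≤ t) (I : Finset V) : 0 ≤ D.minPoint t I := by
  by_cases h : IsSingleton I
  · rwa [minPoint_of_isSingleton h]
  · rw [minPoint_of_not_isSingleton h]
    exact le_max_left _ _

theorem minPoint_le_one (ht : t ≤ 1) (I : Finset V) : D.minPoint t I ≤ 1 := by
  induction I using Finset.strongInduction with
  | _ I ih =>
    by_cases h : IsSingleton I
    · rwa [minPoint_of_isSingleton h]
    · rw [minPoint_of_not_isSingleton h]
      refine max_le zero_le_one (sub_le_self _ (Finset.sum_nonneg fun J hJ => ?_))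
      linarith [ih J (ssubset_of_mem_arcs (mem_succOf.1 hJ))]

theorem minPoint_mem_relax (ht₀ : 0 ≤ t) (ht₁ : t ≤ 1) : D.minPoint t ∈ relax D := by
  refine ⟨fun I _ => ⟨minPoint_nonneg ht₀ I, minPoint_le_one ht₁ I⟩, ?_, ?_⟩
  · rintro ⟨I, J⟩ hIJ
    rw [minPoint_of_not_isSingleton (not_isSingleton_of_mem_arcs hIJ)]
    refine max_le (minPoint_nonneg ht₀ J) ?_
    have hJ : 1 - D.minPoint t J ≤ ∑ K ∈ succOf D.arcs I, (1 - D.minPoint t K) :=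
      Finset.single_le_sum (f := fun K => 1 - D.minPoint t K)
        (fun K _ => by linarith [minPoint_le_one (D := D) ht₁ K]) (mem_succOf.2 hIJ)
    linarith
  · intro I _ hns
    rw [minPoint_of_not_isSingleton hns]
    linarith [le_max_right 0 (1 - ∑ J ∈ succOf D.arcs I, (1 - D.minPoint t J))]

theorem minPoint_of_succOf_eq_pair {I A B : Finset V} (hns : ¬ IsSingleton I) (hAB : A ≠ B)
    (hsucc : succOf D.arcs I = {A, B}) :
    D.minPoint t I = max 0 (D.minPoint t A + D.minPoint t B - 1) := by
  rw [minPoint_of_not_isSingleton hns, hsucc, Finset.sum_pair hAB]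
  ring_nf

theorem minPoint_of_card_eq_two (hbin : Binary D) {I : Finset V} (hI : I ∈ D.nodes)
    (h2 : I.card = 2) : D.minPoint t I = max 0 (2 * t - 1) := by
  have hns : ¬ IsSingleton I := mt isSingleton_iff_card_eq_one.1 (by omega)
  obtain ⟨A, B, hAB, hsucc, hA, hB, -⟩ := exists_succOf_eq_pair hbin hI hns
  have hsingleton {J : Finset V} (hJ : (I, J) ∈ D.arcs) : IsSingleton J := by
    have hlt := Finset.card_lt_card (ssubset_of_mem_arcs hJ)
    have hpos : 0 < J.card := (D.nodes_nonempty _ (D.arcs_snd_mem _ hJ)).card_pos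
    rw [isSingleton_iff_card_eq_one]
    omega
  rw [minPoint_of_succOf_eq_pair hns hAB hsucc, minPoint_of_isSingleton (hsingleton hA),
    minPoint_of_isSingleton (hsingleton hB)]
  ring_nf

theorem minPoint_le_one_sub_card_mul (hbin : Binary D) (ht : t ≤ 1)
    (hV : Fintype.card V * (1 - t) ≤ 1) {I : Finset V} (hI : I ∈ D.nodes) :
    D.minPoint t I ≤ 1 - I.card * (1 - t) := by
  induction I using Finset.strongInduction with
  | _ I ih =>
    by_cases hs : IsSingleton I
    · rw [minPoint_of_isSingleton hs, isSingleton_iff_card_eq_one.1 hs]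
      norm_num
    obtain ⟨A, B, hAB, hsucc, hA, hB, hU⟩ := exists_succOf_eq_pair hbin hI hs
    have ihA := ih A (ssubset_of_mem_arcs hA) (D.arcs_snd_mem _ hA)
    have ihB := ih B (ssubset_of_mem_arcs hB) (D.arcs_snd_mem _ hB)
    have hcard : (I.card : ℝ) ≤ A.card + B.card := by
      exact_mod_cast hU ▸ Finset.card_union_le A B
    have hIV : (I.card : ℝ) * (1 - t) ≤ 1 :=
      (mul_le_mul_of_nonneg_right (by exact_mod_cast I.card_le_univ) (by linarith)).trans hV
    have hcost := mul_le_mul_of_nonneg_right hcard (sub_nonneg.2 ht)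
    rw [minPoint_of_succOf_eq_pair hs hAB hsucc]
    refine max_le (by linarith) ?_
    linarith

theorem minPoint_le_of_succOf_eq_pair (hbin : Binary D) (ht : t ≤ 1)
    (hV : Fintype.card V * (1 - t) ≤ 1) {I A B : Finset V} (hns : ¬ IsSingleton I)
    (hAB : A ≠ B) (hsucc : succOf D.arcs I = {A, B}) (hA : A ∈ D.nodes) (hB : B ∈ D.nodes) :
    D.minPoint t I ≤ max 0 (1 - (A.card + B.card) * (1 - t)) := by
  rw [minPoint_of_succOf_eq_pair hns hAB hsucc]
  have := minPoint_le_one_sub_card_mul hbin ht hV hA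
  have := minPoint_le_one_sub_card_mul hbin ht hV hB
  exact max_le_max le_rfl (by linarith)

end MinPoint

end RecLin

open RecLin

theorem four_pair_of_split_ground : ∀ A : Finset (Fin 6), A ≠ ∅ → A ≠ {0,1,2,3,4,5} →
    (∀ p ∈ succOf D7.arcs {0,1,2,3,4,5}, p ⊆ A ∨ p ⊆ {0,1,2,3,4,5} \ A) →
    (A ∈ E7 ∧ A.card = 4 ∧ ({0,1,2,3,4,5} \ A).card = 2) ∨
      ({0,1,2,3,4,5} \ A ∈ E7 ∧ ({0,1,2,3,4,5} \ A).card = 4 ∧ A.card = 2) := by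
  decide

theorem six_le_card_add_card_of_split_four : ∀ F ∈ E7, F.card = 4 →
    ∀ A ∈ F.powerset, ∀ B ∈ F.powerset, A ∪ B = F → A ≠ F → B ≠ F →
      (∀ q ∈ E7, q.card = 2 → q ⊆ F → q ⊆ A ∨ q ⊆ B) → 6 ≤ A.card + B.card := by
  decide

theorem mem_arcs_or_succOf_ground_of_subset_four : ∀ F ∈ E7, F.card = 4 →
    ∀ q ∈ E7, q.card = 2 → q ⊆ F →
      (F, q) ∈ D7.arcs ∨ q ∈ succOf D7.arcs {0,1,2,3,4,5} := by
  decide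

theorem minPoint_ground_ge_half {D : RecLin (Fin 6)} (hbin : Binary D) (hE : E7 ⊆ D.nodes)
    (hsub : projRelax D E7 ⊆ relax D7) :
    1 / 2 ≤ D.minPoint (11 / 12) {0,1,2,3,4,5} := by
  have hmem := hsub ⟨_, minPoint_mem_relax (D := D) (t := 11 / 12) (by norm_num) (by norm_num),
    fun _ _ => rfl⟩
  have hground := hmem.2.2 {0,1,2,3,4,5} (by decide) (by decide)
  have hsucc : succOf D7.arcs {0,1,2,3,4,5} = {{0,1}, {2,3}, {4,5}} := by decide
  have hpair {p : Finset (Fin 6)} (hp : p ∈ E7) (h2 : p.card = 2) :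
      D.minPoint (11 / 12) p = 5 / 6 := by
    rw [minPoint_of_card_eq_two hbin (hE hp) h2]
    norm_num
  rw [hsucc, Finset.sum_insert (by decide), Finset.sum_insert (by decide), Finset.sum_singleton,
    hpair (p := {0,1}) (by decide) rfl, hpair (p := {2,3}) (by decide) rfl,
    hpair (p := {4,5}) (by decide) rfl] at hground
  linarith

theorem minPoint_four_le_half {D : RecLin (Fin 6)} (hbin : Binary D) {F : Finset (Fin 6)}
    (hF : F ∈ E7) (hF4 : F.card = 4) (hFD : F ∈ D.nodes)
    (hpairs : ∀ q ∈ E7, q.card = 2 → q ⊆ F → D.Reaches F q) :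
    D.minPoint (11 / 12) F ≤ 1 / 2 := by
  have hns : ¬ IsSingleton F := mt isSingleton_iff_card_eq_one.1 (by omega)
  obtain ⟨A, B, hAB, hsucc, hA, hB, hU⟩ := exists_succOf_eq_pair hbin hFD hns
  have hside : ∀ q ∈ E7, q.card = 2 → q ⊆ F → q ⊆ A ∨ q ⊆ B := by
    intro q hq hq2 hqF
    have hne : q ≠ F := ne_of_apply_ne Finset.card (by omega)
    exact ((hpairs q hq hq2 hqF).of_succOf_eq_pair hne hsucc).imp Reaches.subset Reaches.subset
  have hcard := six_le_card_add_card_of_split_four F hF hF4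
    A (Finset.mem_powerset.2 (hU ▸ Finset.subset_union_left))
    B (Finset.mem_powerset.2 (hU ▸ Finset.subset_union_right)) hU
    (ssubset_of_mem_arcs hA).ne (ssubset_of_mem_arcs hB).ne hside
  have hcardR : (6 : ℝ) ≤ A.card + B.card := by exact_mod_cast hcard
  refine (minPoint_le_of_succOf_eq_pair hbin (by norm_num) (by norm_num) hns hAB hsucc
    (D.arcs_snd_mem _ hA) (D.arcs_snd_mem _ hB)).trans (max_le (by norm_num) ?_)
  linarith

theorem minPoint_ground_le_of_succOf_eq {D : RecLin (Fin 6)} (hbin : Binary D)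
    (hE : E7 ⊆ D.nodes) (hreach : ∀ I J, (I, J) ∈ D7.arcs → ¬ IsSingleton J → D.Reaches I J)
    {F P : Finset (Fin 6)} (hsucc : succOf D.arcs {0,1,2,3,4,5} = {F, P}) (hFP : F ≠ P)
    (hdisj : Disjoint F P)
    (hF : F ∈ E7) (hF4 : F.card = 4) (hP : P ∈ D.nodes) (hP2 : P.card = 2) :
    D.minPoint (11 / 12) {0,1,2,3,4,5} ≤ 5 / 12 := by
  have hpairs : ∀ q ∈ E7, q.card = 2 → q ⊆ F → D.Reaches F q := by
    intro q hq hq2 hqF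
    have hqs : ¬ IsSingleton q := mt isSingleton_iff_card_eq_one.1 (by omega)
    rcases mem_arcs_or_succOf_ground_of_subset_four F hF hF4 q hq hq2 hqF with hFq | hgroundq
    · exact hreach F q hFq hqs
    have hne : q ≠ {0,1,2,3,4,5} := ne_of_apply_ne Finset.card (by rw [hq2]; decide)
    refine ((hreach _ q (mem_succOf.1 hgroundq) hqs).of_succOf_eq_pair hne hsucc).resolve_right
      fun hPq => ?_
    have hq0 : q = ∅ := (Finset.disjoint_self_iff_empty q).1 (hdisj.mono hqF hPq.subset)
    rw [hq0] at hq2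
    exact absurd hq2 (by decide)
  have hns : ¬ IsSingleton ({0,1,2,3,4,5} : Finset (Fin 6)) := by decide
  rw [minPoint_of_succOf_eq_pair hns hFP hsucc, minPoint_of_card_eq_two hbin hP hP2]
  have hFle := minPoint_four_le_half hbin hF hF4 (hE hF) hpairs
  refine max_le (by norm_num) ?_
  norm_num
  linarith

theorem minPoint_ground_le {D : RecLin (Fin 6)} (hbin : Binary D) (hE : E7 ⊆ D.nodes)
    (hreach : ∀ I J, (I, J) ∈ D7.arcs → ¬ IsSingleton J → D.Reaches I J) :
    D.minPoint (11 / 12) {0,1,2,3,4,5} ≤ 5 / 12 := by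
  have hns : ¬ IsSingleton ({0,1,2,3,4,5} : Finset (Fin 6)) := by decide
  obtain ⟨A, B, hAB, hsucc, hA, hB, hU⟩ := exists_succOf_eq_pair hbin (hE (by decide)) hns
  by_cases hdisj : Disjoint A B
  · have hBA : B = {0,1,2,3,4,5} \ A := by
      rw [← hU, Finset.union_sdiff_left, hdisj.symm.sdiff_eq_left]
    have hside : ∀ p ∈ succOf D7.arcs {0,1,2,3,4,5}, p ⊆ A ∨ p ⊆ {0,1,2,3,4,5} \ A := by
      intro p hp
      have hp' : ¬ IsSingleton p ∧ p ≠ {0,1,2,3,4,5} := by revert p; decide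
      rw [← hBA]
      exact ((hreach _ p (mem_succOf.1 hp) hp'.1).of_succOf_eq_pair hp'.2 hsucc).imp
        Reaches.subset Reaches.subset
    rcases four_pair_of_split_ground A
        (D.nodes_nonempty _ (D.arcs_snd_mem _ hA)).ne_empty (ssubset_of_mem_arcs hA).ne hside
      with ⟨hAE, hA4, hB2⟩ | ⟨hBE, hB4, hA2⟩
    · exact minPoint_ground_le_of_succOf_eq hbin hE hreach hsucc hAB hdisj hAE hA4
        (D.arcs_snd_mem _ hB) (hBA ▸ hB2)
    · rw [Finset.pair_comm A B] at hsucc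
      exact minPoint_ground_le_of_succOf_eq hbin hE hreach hsucc hAB.symm hdisj.symm
        (hBA ▸ hBE) (hBA ▸ hB4) (D.arcs_snd_mem _ hA) hA2
  · have hcard : 7 ≤ A.card + B.card := by
      have hsum := Finset.card_union_add_card_inter A B
      have hinter := Finset.card_pos.2 (Finset.not_disjoint_iff_nonempty_inter.1 hdisj)
      have hground : ({0,1,2,3,4,5} : Finset (Fin 6)).card = 6 := rfl
      rw [hU] at hsum
      omega
    have hcardR : (7 : ℝ) ≤ A.card + B.card := by exact_mod_cast hcard
    refine (minPoint_le_of_succOf_eq_pair hbin (by norm_num) (by norm_num) hns hAB hsucc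
      (D.arcs_snd_mem _ hA) (D.arcs_snd_mem _ hB)).trans (max_le (by norm_num) ?_)
    linarith

/-- any recursive linearization `D` over `V` with `E ⊆ 𝒱(D)` and
`P_E(D) ⊆ P(D₀)` is non-binary. -/
theorem nonbinary_necessary (D : RecLin (Fin 6))
    (hE : E7 ⊆ D.nodes) (hsub : projRelax D E7 ⊆ relax D7) :
    ¬ Binary D := by
  intro hbin
  have hreach : ∀ I J, (I, J) ∈ D7.arcs → ¬ IsSingleton J → D.Reaches I J :=
    fun _ _ hIJ hJ => reaches_of_projRelax_subset hbin hsub hIJ hJ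
  linarith [minPoint_ground_ge_half hbin hE hsub, minPoint_ground_le hbin hE hreach]
end

section
/- Let G = (V, E) be a hypergraph and let D be any recursive linearization of G. Then flowerRel(G) ⊆ P_E(D). -/
open Finset

/-!
Extend `z ∈ flowerRel E` to every `K ⊆ V` by the strongest lower bound that flower-type
inequalities give: `ẑ K = max (0, max_C (1 - ∑_{A ∈ C} (1 - z A)))`, over all covers `C` of `K`
by hyperedges and singletons. Shrinking `K` only adds covers, so `ẑ` is antitone and satisfies
the arc inequalities of any recursive linearization; gluing covers of the successors of a node
into a cover of the node gives its flower inequality. On `E ∪ S` the flower inequalities of `G`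
(after discarding the members of a cover that miss `K`) and `z_I ≤ x_v` say exactly that
`ẑ ≤ z`, while the trivial cover `{K}` gives `z ≤ ẑ`.
-/

lemma Finset.sum_biUnion_le_sum_sum {ι α M : Type*} [DecidableEq α] [AddCommMonoid M]
    [PartialOrder M] [IsOrderedAddMonoid M] (s : Finset ι) (t : ι → Finset α) {f : α → M}
    (hf : ∀ a ∈ s.biUnion t, 0 ≤ f a) :
    ∑ a ∈ s.biUnion t, f a ≤ ∑ i ∈ s, ∑ a ∈ t i, f a := by
  have h : s.biUnion t = (s.sigma t).image Sigma.snd := by ext; simp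
  rw [h] at hf ⊢
  exact (sum_image_le_of_nonneg hf).trans_eq (sum_sigma s t fun x => f x.2)

section FlowerExtension

variable {V : Type} [Fintype V] [DecidableEq V] {E : Finset (Finset V)} {z : Finset V → ℝ}
  {J K : Finset V} {C : Finset (Finset V)}

variable (E) in
def edgeCovers (K : Finset V) : Finset (Finset (Finset V)) :=
  (E ∪ univ.image singleton).powerset.filter fun C => K ⊆ C.biUnion id

variable (z) in
def coverValue (C : Finset (Finset V)) : ℝ :=
  1 - ∑ A ∈ C, (1 - z A)

variable (E z) in
noncomputable def flowerExt (K : Finset V) : ℝ :=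
  (insert 0 ((edgeCovers E K).image (coverValue z))).max' (insert_nonempty _ _)

lemma mem_edgeCovers :
    C ∈ edgeCovers E K ↔ (∀ A ∈ C, A ∈ E ∨ IsSingleton A) ∧ K ⊆ C.biUnion id := by
  simp only [edgeCovers, mem_filter, mem_powerset, subset_iff (s₁ := C), mem_union, mem_image,
    mem_univ, true_and, IsSingleton, eq_comm]

lemma singleton_mem_edgeCovers (hK : K ∈ E ∨ IsSingleton K) : {K} ∈ edgeCovers E K :=
  mem_edgeCovers.2 ⟨by simpa using hK, by simp⟩

lemma edgeCovers_anti (hJK : J ⊆ K) : edgeCovers E K ⊆ edgeCovers E J := fun _ hC =>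
  mem_edgeCovers.2 ⟨(mem_edgeCovers.1 hC).1, hJK.trans (mem_edgeCovers.1 hC).2⟩

lemma flowerExt_nonneg : 0 ≤ flowerExt E z K :=
  le_max' _ 0 (mem_insert_self _ _)

lemma le_flowerExt (hC : C ∈ edgeCovers E K) : coverValue z C ≤ flowerExt E z K :=
  le_max' _ _ (mem_insert_of_mem (mem_image_of_mem _ hC))

lemma flowerExt_le {b : ℝ} (hb : 0 ≤ b) (h : ∀ C ∈ edgeCovers E K, coverValue z C ≤ b) :
    flowerExt E z K ≤ b :=
  max'_le _ _ _ <| by simpa [hb] using h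

lemma exists_coverValue_eq_flowerExt (h : flowerExt E z K ≠ 0) :
    ∃ C ∈ edgeCovers E K, coverValue z C = flowerExt E z K := by
  rcases mem_insert.1 (max'_mem _ (insert_nonempty 0 ((edgeCovers E K).image (coverValue z))))
    with h0 | hC
  · exact absurd h0 h
  · exact mem_image.1 hC

lemma flowerExt_antitone : Antitone (flowerExt E z) := fun _ _ hJK =>
  flowerExt_le flowerExt_nonneg fun _ hC => le_flowerExt (edgeCovers_anti hJK hC)

lemma flowerExt_le_one (hz : ∀ I, I ∈ E ∨ IsSingleton I → z I ≤ 1) : flowerExt E z K ≤ 1 :=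
  flowerExt_le zero_le_one fun _ hC => sub_le_self _ <|
    sum_nonneg fun A hA => sub_nonneg.2 (hz A ((mem_edgeCovers.1 hC).1 A hA))

lemma one_le_flowerExt_add_sum (hz : ∀ I, I ∈ E ∨ IsSingleton I → z I ≤ 1)
    {T : Finset (Finset V)} (hK : K ⊆ T.biUnion id) :
    1 ≤ flowerExt E z K + ∑ J ∈ T, (1 - flowerExt E z J) := by
  by_cases h0 : ∃ J ∈ T, flowerExt E z J = 0
  · obtain ⟨J₀, hJ₀, hzero⟩ := h0
    have hterm : 1 - flowerExt E z J₀ ≤ ∑ J ∈ T, (1 - flowerExt E z J) :=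
      single_le_sum (f := fun J => 1 - flowerExt E z J)
        (fun J _ => sub_nonneg.2 (flowerExt_le_one hz)) hJ₀
    linarith [flowerExt_nonneg (E := E) (z := z) (K := K)]
  push Not at h0
  choose! cover hcover hvalue using fun J (hJ : J ∈ T) => exists_coverValue_eq_flowerExt (h0 J hJ)
  have hglued : T.biUnion cover ∈ edgeCovers E K := by
    refine mem_edgeCovers.2 ⟨fun A hA => ?_, hK.trans ?_⟩
    · obtain ⟨J, hJ, hA⟩ := mem_biUnion.1 hA
      exact (mem_edgeCovers.1 (hcover J hJ)).1 A hA
    · rw [biUnion_biUnion]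
      exact biUnion_mono fun J hJ => (mem_edgeCovers.1 (hcover J hJ)).2
  have hsum : ∑ A ∈ T.biUnion cover, (1 - z A) ≤ ∑ J ∈ T, (1 - flowerExt E z J) :=
    calc ∑ A ∈ T.biUnion cover, (1 - z A)
        ≤ ∑ J ∈ T, ∑ A ∈ cover J, (1 - z A) :=
          sum_biUnion_le_sum_sum _ _ fun A hA =>
            sub_nonneg.2 (hz A ((mem_edgeCovers.1 hglued).1 A hA))
      _ = ∑ J ∈ T, (1 - flowerExt E z J) :=
          sum_congr rfl fun J hJ => by rw [← hvalue J hJ, coverValue, sub_sub_cancel]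
  have hvalue_glued := le_flowerExt (z := z) hglued
  rw [coverValue] at hvalue_glued
  linarith

lemma flowerExt_mem_relax (hz : ∀ I, I ∈ E ∨ IsSingleton I → z I ≤ 1) (D : RecLin V) :
    flowerExt E z ∈ relax D :=
  ⟨fun _ _ => ⟨flowerExt_nonneg, flowerExt_le_one hz⟩,
    fun a ha => flowerExt_antitone (D.arcs_subset a ha),
    fun I hI hI' => one_le_flowerExt_add_sum hz (D.succ_union I hI hI').ge⟩

lemma one_le_add_sum_of_mem_flowerRel (hz : z ∈ flowerRel E) (hK : K ∈ E)
    (hC : ∀ A ∈ C, A ∈ E ∨ IsSingleton A) (hcov : K ⊆ C.biUnion id)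
    (hmeet : ∀ A ∈ C, (A ∩ K).Nonempty) : 1 ≤ z K + ∑ A ∈ C, (1 - z A) := by
  let e := C.equivFin
  have hflower := hz.2.2 K hK C.card (fun i => e.symm i) (fun i => hC _ (e.symm i).2)
    (fun v hv => by
      obtain ⟨A, hA, hvA⟩ := mem_biUnion.1 (hcov hv)
      exact mem_biUnion.2 ⟨e ⟨A, hA⟩, mem_univ _, by simpa using hvA⟩)
    (fun i => hmeet _ (e.symm i).2)
  rwa [Equiv.sum_comp e.symm (fun A : C => 1 - z A), sum_coe_sort C fun A => 1 - z A] at hflower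

lemma coverValue_le_of_mem_flowerRel (hz : z ∈ flowerRel E) (hK : K ∈ E ∨ IsSingleton K)
    (hC : C ∈ edgeCovers E K) : coverValue z C ≤ z K := by
  obtain ⟨hCE, hcov⟩ := mem_edgeCovers.1 hC
  have hterm : ∀ A ∈ C, 0 ≤ 1 - z A := fun A hA => sub_nonneg.2 (hz.1 A (hCE A hA)).2
  rcases hK with hK | ⟨v, rfl⟩
  · set C' := C.filter fun A => (A ∩ K).Nonempty
    have hcov' : K ⊆ C'.biUnion id := fun v hv => by
      obtain ⟨A, hA, hvA⟩ := mem_biUnion.1 (hcov hv)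
      exact mem_biUnion.2 ⟨A, mem_filter.2 ⟨hA, v, mem_inter.2 ⟨hvA, hv⟩⟩, hvA⟩
    have hflower := one_le_add_sum_of_mem_flowerRel hz hK
      (fun A hA => hCE A (mem_filter.1 hA).1) hcov' (fun A hA => (mem_filter.1 hA).2)
    have hsub : ∑ A ∈ C', (1 - z A) ≤ ∑ A ∈ C, (1 - z A) :=
      sum_le_sum_of_subset_of_nonneg (filter_subset _ _) fun A hA _ => hterm A hA
    rw [coverValue]
    linarith
  · obtain ⟨A, hA, hvA⟩ := mem_biUnion.1 (hcov (mem_singleton_self v))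
    have hzA : z A ≤ z {v} := by
      rcases hCE A hA with hAE | ⟨u, rfl⟩
      · exact hz.2.1 A hAE v hvA
      · rw [mem_singleton.1 hvA]
    have hsingle := single_le_sum hterm hA
    rw [coverValue]
    linarith

lemma flowerExt_eq_of_mem_flowerRel (hz : z ∈ flowerRel E) (hK : K ∈ E ∨ IsSingleton K) :
    flowerExt E z K = z K :=
  le_antisymm (flowerExt_le (hz.1 K hK).1 fun _ hC => coverValue_le_of_mem_flowerRel hz hK hC)
    (by simpa [coverValue] using le_flowerExt (z := z) (singleton_mem_edgeCovers hK))

end FlowerExtension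

theorem flowerRel_subset_projRelax_general {V : Type} [Fintype V] [DecidableEq V]
    (E : Finset (Finset V))
    (D : RecLin V) :
    flowerRel E ⊆ projRelax D E := fun z hz =>
  ⟨flowerExt E z, flowerExt_mem_relax (fun I hI => (hz.1 I hI).2) D,
    fun _ hI => flowerExt_eq_of_mem_flowerRel hz hI⟩

/-- for every recursive linearization `D` of `G`, the extended flower
relaxation is contained in the projected relaxation `P_E(D)`. -/
theorem flowerRel_subset_projRelax {V : Type} [Fintype V] [DecidableEq V]
    (E : Finset (Finset V)) (hE : ∀ I ∈ E, 2 ≤ I.card)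
    (D : RecLin V) (hD : RecLinOf D E) :
    flowerRel E ⊆ projRelax D E :=
  flowerRel_subset_projRelax_general E D
end

section
/- Let G = (V, E) be a hypergraph, let I* ∈ E, and let J*_1, …, J*_k ∈ E ∪ S satisfy J*_1 ∪ … ∪ J*_k ⊇ I* and J*_i ∩ I* ≠ ∅ for all i. Suppose further that for each i ∈ {1,…,k} there exists a node v ∈ I* ∩ J*_i that belongs to no J*_j with j ≠ i. Then there exists a recursive McCormick linearization D of G such that every z ∈ P_E(D) satisfies the extended flower inequality z_{I*} + Σ_{i=1}^k (1 − z_{J*_i}) ≥ 1. -/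
open Finset

set_option linter.unusedVariables false
set_option linter.unusedSectionVars false
set_option maxHeartbeats 1000000

namespace MCAux
variable {V : Type} [Fintype V] [DecidableEq V]

noncomputable def key (V : Type) [Fintype V] [DecidableEq V] : V → ℕ :=
  fun v => ((Fintype.equivFin V) v : ℕ)

lemma key_inj : Function.Injective (key V) := fun a b h =>
  (Fintype.equivFin V).injective (Fin.val_injective h)

def blk (c : V → ℕ) (S : Finset V) : Finset V :=
  S.filter fun v => c v = S.sup c

lemma blk_subset (c : V → ℕ) (S : Finset V) : blk c S ⊆ S := Finset.filter_subset _ _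

lemma blk_nonempty (c : V → ℕ) {S : Finset V} (hS : S.Nonempty) : (blk c S).Nonempty := by
  obtain ⟨b, hb, he⟩ := Finset.exists_mem_eq_sup S hS c
  exact ⟨b, Finset.mem_filter.mpr ⟨hb, he.symm⟩⟩

lemma blk_eq_self {c : V → ℕ} {S : Finset V} : blk c S = S ↔ ∀ v ∈ S, c v = S.sup c :=
  Finset.filter_eq_self

lemma blk_key_ne {S : Finset V} (h2 : 2 ≤ S.card) : blk (key V) S ≠ S := by
  intro h
  obtain ⟨a, ha, b, hb, hab⟩ := Finset.one_lt_card.mp h2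
  have ha' := blk_eq_self.mp h a ha
  have hb' := blk_eq_self.mp h b hb
  exact hab (key_inj (ha'.trans hb'.symm))

noncomputable def ch1 (c : V → ℕ) (S : Finset V) : Finset V :=
  if blk c S = S then blk (key V) S else blk c S

noncomputable def ch2 (c : V → ℕ) (S : Finset V) : Finset V := S \ ch1 c S

lemma ch1_subset (c : V → ℕ) (S : Finset V) : ch1 c S ⊆ S := by
  unfold ch1; split <;> exact blk_subset _ _

lemma ch1_nonempty (c : V → ℕ) {S : Finset V} (hS : S.Nonempty) : (ch1 c S).Nonempty := by
  unfold ch1; split <;> exact blk_nonempty _ hS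

lemma ch1_ne (c : V → ℕ) {S : Finset V} (h2 : 2 ≤ S.card) : ch1 c S ≠ S := by
  unfold ch1; split
  · exact blk_key_ne h2
  · next h => exact h

lemma ch1_ssubset (c : V → ℕ) {S : Finset V} (h2 : 2 ≤ S.card) : ch1 c S ⊂ S :=
  (Finset.ssubset_iff_subset_ne).mpr ⟨ch1_subset c S, ch1_ne c h2⟩

lemma ch2_nonempty (c : V → ℕ) {S : Finset V} (h2 : 2 ≤ S.card) : (ch2 c S).Nonempty :=
  Finset.sdiff_nonempty.mpr fun h => ch1_ne c h2 (subset_antisymm (ch1_subset c S) h)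

lemma ch2_ssubset (c : V → ℕ) {S : Finset V} (h2 : 2 ≤ S.card) : ch2 c S ⊂ S := by
  have h1 : (ch1 c S).Nonempty := ch1_nonempty c (Finset.card_pos.mp (by omega))
  exact Finset.sdiff_ssubset (ch1_subset c S) h1

lemma ch_union (c : V → ℕ) (S : Finset V) : ch1 c S ∪ ch2 c S = S :=
  Finset.union_sdiff_of_subset (ch1_subset c S)

lemma ch_disjoint (c : V → ℕ) (S : Finset V) : Disjoint (ch1 c S) (ch2 c S) :=
  Finset.disjoint_sdiff

lemma ch_ne (c : V → ℕ) {S : Finset V} (h2 : 2 ≤ S.card) : ch1 c S ≠ ch2 c S := by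
  intro h
  have hd := ch_disjoint c S
  rw [h] at hd
  exact (ch2_nonempty c h2).ne_empty (disjoint_self.mp hd)

noncomputable def descend (c : V → ℕ) (S : Finset V) : Finset (Finset V) :=
  if h : 2 ≤ S.card then insert S (descend c (ch1 c S) ∪ descend c (ch2 c S)) else {S}
termination_by S.card
decreasing_by
  · exact Finset.card_lt_card (ch1_ssubset c h)
  · exact Finset.card_lt_card (ch2_ssubset c h)

lemma descend_eq (c : V → ℕ) (S : Finset V) :
    descend c S =
      if 2 ≤ S.card then insert S (descend c (ch1 c S) ∪ descend c (ch2 c S)) else {S} := by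
  rw [descend]
  by_cases h : 2 ≤ S.card <;> simp [h]

lemma self_mem_descend (c : V → ℕ) (S : Finset V) : S ∈ descend c S := by
  rw [descend_eq]; split
  · exact Finset.mem_insert_self _ _
  · exact Finset.mem_singleton_self _

lemma ch_mem_descend (c : V → ℕ) {S : Finset V} (h2 : 2 ≤ S.card) :
    ch1 c S ∈ descend c S ∧ ch2 c S ∈ descend c S := by
  rw [descend_eq, if_pos h2]
  constructor
  · exact Finset.mem_insert_of_mem (Finset.mem_union_left _ (self_mem_descend _ _))
  · exact Finset.mem_insert_of_mem (Finset.mem_union_right _ (self_mem_descend _ _))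

lemma mem_descend_cases (c : V → ℕ) {S T : Finset V} (hT : T ∈ descend c S) :
    T = S ∨ (2 ≤ S.card ∧ (T ∈ descend c (ch1 c S) ∨ T ∈ descend c (ch2 c S))) := by
  rw [descend_eq] at hT
  by_cases h2 : 2 ≤ S.card
  · rw [if_pos h2] at hT
    rcases Finset.mem_insert.mp hT with h | h
    · exact Or.inl h
    · exact Or.inr ⟨h2, Finset.mem_union.mp h⟩
  · rw [if_neg h2] at hT
    exact Or.inl (Finset.mem_singleton.mp hT)

lemma descend_subset (c : V → ℕ) : ∀ S : Finset V, ∀ T ∈ descend c S, T ⊆ S := by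
  intro S
  induction S using Finset.strongInduction with
  | _ S ih =>
    intro T hT
    rcases mem_descend_cases c hT with rfl | ⟨h2, h | h⟩
    · exact subset_rfl
    · exact (ih _ (ch1_ssubset c h2) T h).trans (ch1_subset c S)
    · exact (ih _ (ch2_ssubset c h2) T h).trans (Finset.sdiff_subset)

lemma descend_nonempty (c : V → ℕ) : ∀ S : Finset V, S.Nonempty → ∀ T ∈ descend c S, T.Nonempty := by
  intro S
  induction S using Finset.strongInduction with
  | _ S ih =>
    intro hS T hT
    rcases mem_descend_cases c hT with rfl | ⟨h2, h | h⟩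
    · exact hS
    · exact ih _ (ch1_ssubset c h2) (ch1_nonempty c hS) T h
    · exact ih _ (ch2_ssubset c h2) (ch2_nonempty c h2) T h

lemma descend_trans (c : V → ℕ) : ∀ S T : Finset V, T ∈ descend c S → descend c T ⊆ descend c S := by
  intro S
  induction S using Finset.strongInduction with
  | _ S ih =>
    intro T hT
    rcases mem_descend_cases c hT with rfl | ⟨h2, h | h⟩
    · exact subset_rfl
    · refine (ih _ (ch1_ssubset c h2) T h).trans ?_
      rw [descend_eq c S, if_pos h2]
      exact (Finset.subset_union_left).trans (Finset.subset_insert _ _)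
    · refine (ih _ (ch2_ssubset c h2) T h).trans ?_
      rw [descend_eq c S, if_pos h2]
      exact (Finset.subset_union_right).trans (Finset.subset_insert _ _)

lemma descend_pred (c : V → ℕ) : ∀ S T : Finset V, T ∈ descend c S → T ≠ S →
    ∃ U ∈ descend c S, 2 ≤ U.card ∧ (T = ch1 c U ∨ T = ch2 c U) := by
  intro S
  induction S using Finset.strongInduction with
  | _ S ih =>
    intro T hT hne
    rcases mem_descend_cases c hT with rfl | ⟨h2, h | h⟩
    · exact absurd rfl hne
    · by_cases he : T = ch1 c S
      · exact ⟨S, self_mem_descend c S, h2, Or.inl he⟩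
      · obtain ⟨U, hU, hU2, hUc⟩ := ih _ (ch1_ssubset c h2) T h he
        exact ⟨U, descend_trans c S _ (ch_mem_descend c h2).1 hU, hU2, hUc⟩
    · by_cases he : T = ch2 c S
      · exact ⟨S, self_mem_descend c S, h2, Or.inr he⟩
      · obtain ⟨U, hU, hU2, hUc⟩ := ih _ (ch2_ssubset c h2) T h he
        exact ⟨U, descend_trans c S _ (ch_mem_descend c h2).2 hU, hU2, hUc⟩

lemma eq_singleton_of_small {S : Finset V} (hS : S.Nonempty) (h : ¬ 2 ≤ S.card) :
    ∃ v, S = {v} :=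
  Finset.card_eq_one.mp (by have := hS.card_pos; omega)

lemma not_isSingleton_of_two_le {S : Finset V} (h2 : 2 ≤ S.card) : ¬ IsSingleton S := by
  rintro ⟨v, rfl⟩
  simp at h2

lemma two_le_of_not_isSingleton {S : Finset V} (hS : S.Nonempty) (h : ¬ IsSingleton S) :
    2 ≤ S.card := by
  by_contra h2
  exact h (eq_singleton_of_small hS h2)

lemma mem_succOf {A : Finset (Finset V × Finset V)} {I J : Finset V} :
    J ∈ succOf A I ↔ (I, J) ∈ A := by
  unfold succOf
  simp only [Finset.mem_image, Finset.mem_filter]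
  constructor
  · rintro ⟨⟨a, b⟩, ⟨hA, rfl⟩, rfl⟩
    exact hA
  · intro h
    exact ⟨(I, J), ⟨h, rfl⟩, rfl⟩

noncomputable def nodesD (c : V → ℕ) (E : Finset (Finset V)) : Finset (Finset V) :=
  E.biUnion (descend c) ∪ Finset.univ.image (fun v => ({v} : Finset V))

noncomputable def arcsD (c : V → ℕ) (E : Finset (Finset V)) :
    Finset (Finset V × Finset V) :=
  (nodesD c E).biUnion fun S =>
    if 2 ≤ S.card then {(S, ch1 c S), (S, ch2 c S)} else ∅

lemma mem_nodesD {c : V → ℕ} {E : Finset (Finset V)} {S : Finset V} :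
    S ∈ nodesD c E ↔ (∃ I ∈ E, S ∈ descend c I) ∨ ∃ v, S = {v} := by
  unfold nodesD
  simp only [Finset.mem_union, Finset.mem_biUnion, Finset.mem_image, Finset.mem_univ,
    true_and]
  constructor
  · rintro (h | ⟨v, hv⟩)
    · exact Or.inl h
    · exact Or.inr ⟨v, hv.symm⟩
  · rintro (h | ⟨v, hv⟩)
    · exact Or.inl h
    · exact Or.inr ⟨v, hv.symm⟩

lemma singleton_mem_nodesD {c : V → ℕ} {E : Finset (Finset V)} (v : V) :
    ({v} : Finset V) ∈ nodesD c E :=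
  mem_nodesD.mpr (Or.inr ⟨v, rfl⟩)

lemma mem_nodesD_of_E {c : V → ℕ} {E : Finset (Finset V)} {I : Finset V} (hI : I ∈ E) :
    I ∈ nodesD c E :=
  mem_nodesD.mpr (Or.inl ⟨I, hI, self_mem_descend c I⟩)

lemma mem_arcsD {c : V → ℕ} {E : Finset (Finset V)} {a : Finset V × Finset V} :
    a ∈ arcsD c E ↔ a.1 ∈ nodesD c E ∧ 2 ≤ a.1.card ∧
      (a.2 = ch1 c a.1 ∨ a.2 = ch2 c a.1) := by
  unfold arcsD
  simp only [Finset.mem_biUnion]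
  constructor
  · rintro ⟨S, hS, ha⟩
    by_cases h2 : 2 ≤ S.card
    · rw [if_pos h2] at ha
      rcases Finset.mem_insert.mp ha with h | h
      · subst h; exact ⟨hS, h2, Or.inl rfl⟩
      · rw [Finset.mem_singleton] at h; subst h; exact ⟨hS, h2, Or.inr rfl⟩
    · rw [if_neg h2] at ha
      exact absurd ha (Finset.notMem_empty _)
  · rintro ⟨h1, h2, h3⟩
    refine ⟨a.1, h1, ?_⟩
    rw [if_pos h2]
    rcases h3 with h | h
    · exact Finset.mem_insert.mpr (Or.inl (Prod.ext rfl h))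
    · exact Finset.mem_insert.mpr (Or.inr (Finset.mem_singleton.mpr (Prod.ext rfl h)))

lemma nodesD_closed {c : V → ℕ} {E : Finset (Finset V)} {S : Finset V}
    (hS : S ∈ nodesD c E) (h2 : 2 ≤ S.card) :
    ch1 c S ∈ nodesD c E ∧ ch2 c S ∈ nodesD c E := by
  rcases mem_nodesD.mp hS with ⟨I, hI, hSI⟩ | ⟨v, rfl⟩
  · constructor
    · exact mem_nodesD.mpr (Or.inl ⟨I, hI, descend_trans c I S hSI (ch_mem_descend c h2).1⟩)
    · exact mem_nodesD.mpr (Or.inl ⟨I, hI, descend_trans c I S hSI (ch_mem_descend c h2).2⟩)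
  · simp at h2

lemma succOf_arcsD {c : V → ℕ} {E : Finset (Finset V)} {S : Finset V}
    (hS : S ∈ nodesD c E) (h2 : 2 ≤ S.card) :
    succOf (arcsD c E) S = {ch1 c S, ch2 c S} := by
  ext J
  rw [mem_succOf, mem_arcsD]
  simp only [Finset.mem_insert, Finset.mem_singleton]
  constructor
  · rintro ⟨-, -, h⟩; exact h
  · intro h; exact ⟨hS, h2, h⟩

noncomputable def mkD (c : V → ℕ) (E : Finset (Finset V)) (hE : ∀ I ∈ E, 2 ≤ I.card) :
    RecLin V where
  nodes := nodesD c E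
  arcs := arcsD c E
  arcs_fst_mem a ha := (mem_arcsD.mp ha).1
  arcs_snd_mem a ha := by
    obtain ⟨h1, h2, h3⟩ := mem_arcsD.mp ha
    rcases h3 with h | h
    · rw [h]; exact (nodesD_closed h1 h2).1
    · rw [h]; exact (nodesD_closed h1 h2).2
  no_loops a ha := by
    obtain ⟨h1, h2, h3⟩ := mem_arcsD.mp ha
    rcases h3 with h | h
    · rw [h]; exact (ch1_ne c h2).symm
    · rw [h]; exact fun he => (ch2_ssubset c h2).ne (he.symm)
  singleton_mem v := singleton_mem_nodesD v
  nodes_nonempty I hI := by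
    rcases mem_nodesD.mp hI with ⟨I0, hI0, hII0⟩ | ⟨v, rfl⟩
    · exact descend_nonempty c I0 (Finset.card_pos.mp (by have := hE I0 hI0; omega)) I hII0
    · exact Finset.singleton_nonempty v
  arcs_subset a ha := by
    obtain ⟨h1, h2, h3⟩ := mem_arcsD.mp ha
    rcases h3 with h | h
    · rw [h]; exact ch1_subset c a.1
    · rw [h]; exact Finset.sdiff_subset
  succ_union I hI hns := by
    have h2 : 2 ≤ I.card := by
      rcases mem_nodesD.mp hI with ⟨I0, hI0, hII0⟩ | ⟨v, rfl⟩
      · exact two_le_of_not_isSingleton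
          (descend_nonempty c I0 (Finset.card_pos.mp (by have := hE I0 hI0; omega)) I hII0) hns
      · exact absurd ⟨v, rfl⟩ hns
    rw [succOf_arcsD hI h2]
    rw [Finset.biUnion_insert, Finset.singleton_biUnion]
    exact ch_union c I

lemma mkD_mccormick (c : V → ℕ) (E : Finset (Finset V)) (hE : ∀ I ∈ E, 2 ≤ I.card) :
    McCormick (mkD c E hE) := by
  constructor
  · intro I hI J hJ J' hJ' hne
    obtain ⟨-, h2, h3⟩ := mem_arcsD.mp (mem_succOf.mp hJ)
    obtain ⟨-, -, h3'⟩ := mem_arcsD.mp (mem_succOf.mp hJ')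
    simp only at h3 h3'
    have hd := Finset.disjoint_iff_inter_eq_empty.mp (ch_disjoint c I)
    rcases h3 with h | h <;> rcases h3' with h' | h' <;> rw [h, h'] at hne ⊢
    · exact absurd rfl hne
    · exact hd
    · rw [Finset.inter_comm]; exact hd
    · exact absurd rfl hne
  · intro I hI hns
    have h2 : 2 ≤ I.card :=
      two_le_of_not_isSingleton ((mkD c E hE).nodes_nonempty I hI) hns
    rw [show (mkD c E hE).arcs = arcsD c E from rfl] at *
    rw [succOf_arcsD hI h2]
    exact Finset.card_pair (ch_ne c h2)

lemma mkD_recLinOf (c : V → ℕ) (E : Finset (Finset V)) (hE : ∀ I ∈ E, 2 ≤ I.card) :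
    RecLinOf (mkD c E hE) E := by
  constructor
  · intro I hI
    exact mem_nodesD_of_E hI
  · intro I hI hnp
    rcases mem_nodesD.mp hI with ⟨I0, hI0, hII0⟩ | ⟨v, rfl⟩
    · by_cases he : I = I0
      · exact Or.inl (he ▸ hI0)
      · obtain ⟨U, hU, hU2, hUc⟩ := descend_pred c I0 I hII0 he
        have hUn : U ∈ nodesD c E := mem_nodesD.mpr (Or.inl ⟨I0, hI0, hU⟩)
        have : (U, I) ∈ arcsD c E := by
          rw [mem_arcsD]; exact ⟨hUn, hU2, hUc⟩
        exact absurd rfl (hnp (U, I) this)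
    · exact Or.inr ⟨v, rfl⟩


lemma mem_blk {c : V → ℕ} {S : Finset V} {v : V} :
    v ∈ blk c S ↔ v ∈ S ∧ c v = S.sup c := Finset.mem_filter

section Relax
variable {E : Finset (Finset V)} {c : V → ℕ} {w : Finset V → ℝ}

lemma mono_of (harc : ∀ a ∈ arcsD c E, w a.1 ≤ w a.2) :
    ∀ S : Finset V, S ∈ nodesD c E → ∀ T ∈ descend c S, w S ≤ w T := by
  intro S
  induction S using Finset.strongInduction with
  | _ S ih =>
    intro hS T hT
    rcases mem_descend_cases c hT with rfl | ⟨h2, h | h⟩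
    · exact le_refl _
    · have ha : ((S, ch1 c S) : _ × _) ∈ arcsD c E := mem_arcsD.mpr ⟨hS, h2, Or.inl rfl⟩
      exact (harc _ ha).trans (ih _ (ch1_ssubset c h2) (nodesD_closed hS h2).1 T h)
    · have ha : ((S, ch2 c S) : _ × _) ∈ arcsD c E := mem_arcsD.mpr ⟨hS, h2, Or.inr rfl⟩
      exact (harc _ ha).trans (ih _ (ch2_ssubset c h2) (nodesD_closed hS h2).2 T h)

lemma flower_of
    (hfl : ∀ I ∈ nodesD c E, ¬ IsSingleton I →
      w I + ∑ Jx ∈ succOf (arcsD c E) I, (1 - w Jx) ≥ 1)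
    {S : Finset V} (hS : S ∈ nodesD c E) (h2 : 2 ≤ S.card) :
    w S + (1 - w (ch1 c S)) + (1 - w (ch2 c S)) ≥ 1 := by
  have h := hfl S hS (not_isSingleton_of_two_le h2)
  rw [succOf_arcsD hS h2, Finset.sum_pair (ch_ne c h2)] at h
  linarith

lemma chain_ineq (harc : ∀ a ∈ arcsD c E, w a.1 ≤ w a.2)
    (hfl : ∀ I ∈ nodesD c E, ¬ IsSingleton I →
      w I + ∑ Jx ∈ succOf (arcsD c E) I, (1 - w Jx) ≥ 1) :
    ∀ S : Finset V, S ∈ nodesD c E → S.Nonempty →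
      w S + ∑ i ∈ S.image c, (1 - w (S.filter fun v => c v = i)) ≥ 1 := by
  intro S
  induction S using Finset.strongInduction with
  | _ S ih =>
    intro hS hne
    by_cases hmono : blk c S = S
    · have himg : S.image c = {S.sup c} := by
        apply subset_antisymm
        · intro i hi
          obtain ⟨v, hv, rfl⟩ := Finset.mem_image.mp hi
          exact Finset.mem_singleton.mpr (blk_eq_self.mp hmono v hv)
        · obtain ⟨b, hb, he⟩ := Finset.exists_mem_eq_sup S hne c
          intro i hi
          rw [Finset.mem_singleton] at hi
          exact Finset.mem_image.mpr ⟨b, hb, by rw [hi, he]⟩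
      have hfe : S.filter (fun v => c v = S.sup c) = S := hmono
      rw [himg, Finset.sum_singleton, hfe]
      linarith
    · have h2 : 2 ≤ S.card := by
        by_contra h2
        obtain ⟨v, rfl⟩ := eq_singleton_of_small hne h2
        exact hmono (blk_eq_self.mpr (by simp))
      have hch1 : ch1 c S = blk c S := if_neg hmono
      have hbne : S.sup c ∉ (ch2 c S).image c := by
        intro hmem
        obtain ⟨v, hv, he⟩ := Finset.mem_image.mp hmem
        obtain ⟨hvS, hvn⟩ := Finset.mem_sdiff.mp hv
        exact hvn (by rw [hch1]; exact mem_blk.mpr ⟨hvS, he⟩)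
      have himg : S.image c = insert (S.sup c) ((ch2 c S).image c) := by
        ext i
        simp only [Finset.mem_image, Finset.mem_insert]
        constructor
        · rintro ⟨v, hv, rfl⟩
          by_cases hcv : c v = S.sup c
          · exact Or.inl hcv
          · refine Or.inr ⟨v, Finset.mem_sdiff.mpr ⟨hv, ?_⟩, rfl⟩
            rw [hch1]
            exact fun hb => hcv (mem_blk.mp hb).2
        · rintro (rfl | ⟨v, hv, rfl⟩)
          · obtain ⟨b, hb, he⟩ := Finset.exists_mem_eq_sup S hne c
            exact ⟨b, hb, he.symm⟩
          · exact ⟨v, (Finset.mem_sdiff.mp hv).1, rfl⟩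
      have hfb : S.filter (fun v => c v = S.sup c) = ch1 c S := by rw [hch1]; rfl
      have hfilter : ∀ i ∈ (ch2 c S).image c,
          S.filter (fun v => c v = i) = (ch2 c S).filter (fun v => c v = i) := by
        intro i hi
        have hib : i ≠ S.sup c := fun he => hbne (he ▸ hi)
        ext v
        simp only [Finset.mem_filter, ch2, Finset.mem_sdiff]
        constructor
        · rintro ⟨hvS, hvc⟩
          refine ⟨⟨hvS, ?_⟩, hvc⟩
          rw [hch1]
          intro hb
          exact hib (hvc.symm.trans (mem_blk.mp hb).2)
        · rintro ⟨⟨hvS, -⟩, hvc⟩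
          exact ⟨hvS, hvc⟩
      have hnode2 : ch2 c S ∈ nodesD c E := (nodesD_closed hS h2).2
      have IH := ih (ch2 c S) (ch2_ssubset c h2) hnode2 (ch2_nonempty c h2)
      have hflo := flower_of hfl hS h2
      have hsum : ∑ i ∈ (ch2 c S).image c, (1 - w (S.filter fun v => c v = i))
          = ∑ i ∈ (ch2 c S).image c, (1 - w ((ch2 c S).filter fun v => c v = i)) :=
        Finset.sum_congr rfl (fun i hi => by rw [hfilter i hi])
      rw [himg, Finset.sum_insert hbne, hfb, hsum]
      linarith

end Relax

lemma filter_mem_descend (c : V → ℕ) :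
    ∀ S : Finset V, ∀ i : ℕ, (S.filter fun v => c v = i).Nonempty →
      (S.filter fun v => c v = i) ∈ descend c S := by
  intro S
  induction S using Finset.strongInduction with
  | _ S ih =>
    intro i hne
    by_cases hFS : S.filter (fun v => c v = i) = S
    · rw [hFS]; exact self_mem_descend c S
    · have hSne : S.Nonempty := by
        obtain ⟨v, hv⟩ := hne
        exact ⟨v, (Finset.mem_filter.mp hv).1⟩
      have h2 : 2 ≤ S.card := by
        by_contra h2
        obtain ⟨v, rfl⟩ := eq_singleton_of_small hSne h2
        obtain ⟨u, hu⟩ := hne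
        have huv : u = v := Finset.mem_singleton.mp (Finset.mem_filter.mp hu).1
        apply hFS
        apply subset_antisymm (Finset.filter_subset _ _)
        intro x hx
        rw [Finset.mem_singleton] at hx; subst hx
        exact huv ▸ hu
      have hmono : blk c S ≠ S := by
        intro hm
        obtain ⟨v, hv⟩ := hne
        obtain ⟨hvS, hvc⟩ := Finset.mem_filter.mp hv
        have hisup : i = S.sup c := hvc.symm.trans (blk_eq_self.mp hm v hvS)
        subst hisup
        exact hFS hm
      have hch1 : ch1 c S = blk c S := if_neg hmono
      by_cases hib : i = S.sup c
      · subst hib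
        have h1 := (ch_mem_descend c h2).1
        rw [hch1] at h1
        exact h1
      · have hsub : S.filter (fun v => c v = i) ⊆ ch2 c S := by
          intro v hv
          obtain ⟨hvS, hvc⟩ := Finset.mem_filter.mp hv
          refine Finset.mem_sdiff.mpr ⟨hvS, ?_⟩
          rw [hch1]
          intro hb
          exact hib (hvc.symm.trans (mem_blk.mp hb).2)
        have heq : (ch2 c S).filter (fun v => c v = i) = S.filter (fun v => c v = i) := by
          apply subset_antisymm
          · intro v hv
            obtain ⟨hv2, hvc⟩ := Finset.mem_filter.mp hv
            exact Finset.mem_filter.mpr ⟨(Finset.mem_sdiff.mp hv2).1, hvc⟩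
          · intro v hv
            exact Finset.mem_filter.mpr ⟨hsub hv, (Finset.mem_filter.mp hv).2⟩
        have IH := ih (ch2 c S) (ch2_ssubset c h2) i (by rw [heq]; exact hne)
        rw [heq] at IH
        exact descend_trans c S (ch2 c S) (ch_mem_descend c h2).2 IH

end MCAux

/-- for every non-redundant extended flower inequality there is a
recursive McCormick linearization of `G` whose projected relaxation implies it. -/
theorem mccormick_implies_nonredundant_flower {V : Type} [Fintype V] [DecidableEq V]
    (E : Finset (Finset V)) (hE : ∀ I ∈ E, 2 ≤ I.card)
    (Istar : Finset V) (hIstar : Istar ∈ E)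
    (k : ℕ) (J : Fin k → Finset V)
    (hJmem : ∀ i, J i ∈ E ∨ IsSingleton (J i))
    (hcover : Istar ⊆ Finset.univ.biUnion J)
    (hinter : ∀ i, (J i ∩ Istar).Nonempty)
    (hnonred : ∀ i, ∃ v ∈ Istar ∩ J i, ∀ j, j ≠ i → v ∉ J j) :
    ∃ D : RecLin V, RecLinOf D E ∧ McCormick D ∧
      ∀ z ∈ projRelax D E, z Istar + ∑ i, (1 - z (J i)) ≥ 1 := by
  classical
  rcases Nat.eq_zero_or_pos k with hk0 | hk
  · exfalso
    subst hk0
    obtain ⟨v, hv⟩ := Finset.card_pos.mp (show 0 < Istar.card by have := hE Istar hIstar; omega)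
    obtain ⟨i, -, -⟩ := Finset.mem_biUnion.mp (hcover hv)
    exact i.elim0
  · have hsel : ∀ v : V, ∃ i : Fin k, v ∈ Istar → v ∈ J i := by
      intro v
      by_cases hv : v ∈ Istar
      · obtain ⟨i, -, hi⟩ := Finset.mem_biUnion.mp (hcover hv)
        exact ⟨i, fun _ => hi⟩
      · exact ⟨⟨0, hk⟩, fun h => absurd h hv⟩
    choose sel hselp using hsel
    set c : V → ℕ := fun v => if v ∈ Istar then (sel v : ℕ) else k with hcdef
    choose vr hvr1 hvr2 using hnonred
    have hvrI : ∀ i, vr i ∈ Istar := fun i => (Finset.mem_inter.mp (hvr1 i)).1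
    have hvrJ : ∀ i, vr i ∈ J i := fun i => (Finset.mem_inter.mp (hvr1 i)).2
    have hselvr : ∀ i, sel (vr i) = i := by
      intro i
      by_contra hne
      exact hvr2 i (sel (vr i)) hne (hselp (vr i) (hvrI i))
    have hcI : ∀ v ∈ Istar, c v = (sel v : ℕ) := fun v hv => if_pos hv
    have hcvr : ∀ i, c (vr i) = (i : ℕ) := fun i => by
      rw [hcI _ (hvrI i), hselvr i]
    have hclt : ∀ v ∈ Istar, c v < k := fun v hv => by
      rw [hcI v hv]; exact (sel v).isLt
    have hcnot : ∀ v, v ∉ Istar → c v = k := fun v hv => if_neg hv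
    have hIcard := hE Istar hIstar
    have hIne : Istar.Nonempty := Finset.card_pos.mp (by omega)
    have hJA : ∀ i : Fin k,
        (J i).filter (fun v => c v = (i : ℕ)) = Istar.filter (fun v => c v = (i : ℕ)) := by
      intro i
      ext v
      simp only [Finset.mem_filter]
      constructor
      · rintro ⟨hvJ, hvc⟩
        by_cases hvI : v ∈ Istar
        · exact ⟨hvI, hvc⟩
        · rw [hcnot v hvI] at hvc
          exact absurd hvc.symm (Nat.ne_of_lt i.isLt)
      · rintro ⟨hvI, hvc⟩
        refine ⟨?_, hvc⟩
        have hsv : sel v = i := Fin.ext ((hcI v hvI).symm.trans hvc)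
        rw [← hsv]
        exact hselp v hvI
    have hAne : ∀ i : Fin k, (Istar.filter (fun v => c v = (i : ℕ))).Nonempty :=
      fun i => ⟨vr i, Finset.mem_filter.mpr ⟨hvrI i, hcvr i⟩⟩
    refine ⟨MCAux.mkD c E hE, MCAux.mkD_recLinOf c E hE, MCAux.mkD_mccormick c E hE, ?_⟩
    intro z hz
    obtain ⟨w, ⟨hw0, hw1, hw2⟩, hag⟩ := hz
    have harc : ∀ a ∈ MCAux.arcsD c E, w a.1 ≤ w a.2 := hw1
    have hfl : ∀ I ∈ MCAux.nodesD c E, ¬ IsSingleton I →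
        w I + ∑ Jx ∈ succOf (MCAux.arcsD c E) I, (1 - w Jx) ≥ 1 := hw2
    have hchain := MCAux.chain_ineq harc hfl Istar (MCAux.mem_nodesD_of_E hIstar) hIne
    have himg : Istar.image c = Finset.range k := by
      ext i
      simp only [Finset.mem_image, Finset.mem_range]
      constructor
      · rintro ⟨v, hv, rfl⟩; exact hclt v hv
      · intro hi
        exact ⟨vr ⟨i, hi⟩, hvrI _, hcvr ⟨i, hi⟩⟩
    have hJnode : ∀ i : Fin k, J i ∈ MCAux.nodesD c E := by
      intro i
      rcases hJmem i with h | ⟨v, hv⟩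
      · exact MCAux.mem_nodesD_of_E h
      · rw [hv]; exact MCAux.singleton_mem_nodesD v
    have hwJA : ∀ i : Fin k, w (J i) ≤ w (Istar.filter (fun v => c v = (i : ℕ))) := by
      intro i
      have hFne : ((J i).filter (fun v => c v = (i : ℕ))).Nonempty := by
        rw [hJA i]; exact hAne i
      have hFd := MCAux.filter_mem_descend c (J i) (i : ℕ) hFne
      have hmw := MCAux.mono_of harc (J i) (hJnode i) _ hFd
      rwa [hJA i] at hmw
    have hzI : z Istar = w Istar := (hag Istar (Or.inl hIstar)).symm
    have hsum1 : ∑ i : Fin k, (1 - z (J i)) = ∑ i : Fin k, (1 - w (J i)) :=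
      Finset.sum_congr rfl (fun i _ => by rw [(hag (J i) (hJmem i)).symm])
    have hsum2 : ∑ i : Fin k, (1 - w (Istar.filter (fun v => c v = (i : ℕ))))
        ≤ ∑ i : Fin k, (1 - w (J i)) := by
      apply Finset.sum_le_sum
      intro i _
      have := hwJA i
      linarith
    have hsum3 : ∑ i : Fin k, (1 - w (Istar.filter (fun v => c v = (i : ℕ))))
        = ∑ i ∈ Istar.image c, (1 - w (Istar.filter (fun v => c v = i))) := by
      rw [himg]
      exact Fin.sum_univ_eq_sum_range (fun n => 1 - w (Istar.filter (fun v => c v = n))) k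
    rw [hzI, hsum1]
    linarith [hsum2, hsum3, hchain]
end
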